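/- arXiv:math/0405026 — 3 statements merged into one kernel-verified Lean document; each statement's English description precedes it below -/
import Mathlib

section
/- Let a ∈ ℝ^12 be the coefficient vector of a quadratic system with C2(a,x,y) not identically zero. Then there exists g ∈ GL(2,ℝ) such that the transformed system r_g(a) has degree-2 homogeneous parts (p̃2, q̃2) of exactly one of the following four canonical shapes, for some real numbers g̃, h̃: (I) p̃2 = g̃·x² + (h̃−1)·x·y, q̃2 = (g̃−1)·x·y + h̃·y²; (II) p̃2 = g̃·x² + (h̃+1)·x·y, q̃2 = −x² + g̃·x·y + h̃·y²; (III) p̃2 = g̃·x² + h̃·x·y, q̃2 = (g̃−1)·x·y + h̃·y²; (IV) p̃2 = g̃·x² + h̃·x·y, q̃2 = −x² + g̃·x·y + h̃·y². Moreover case (I) occurs exactly when η(a) > 0, case (II) exactly when η(a) < 0, case (III) exactly when η(a) = 0 and M(a,x,y) is not identically zero, and case (IV) exactly when M(a,x,y) is identically zero. -/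
open MvPolynomial Finset

noncomputable section

namespace QSinf

/-!  Coefficient conventions: for `a : Fin 12 → ℝ`,
`a 0 = a00, a 1 = a10, a 2 = a01, a 3 = a20, a 4 = a11, a 5 = a02,
 a 6 = b00, a 7 = b10, a 8 = b01, a 9 = b20, a 10 = b11, a 11 = b02`,
so that `p = a00 + a10*x + a01*y + a20*x^2 + 2*a11*x*y + a02*y^2` and
`q = b00 + b10*x + b01*y + b20*x^2 + 2*b11*x*y + b02*y^2`. -/

/-- linear part of `p` -/
def p1f (a : Fin 12 → ℝ) (x y : ℝ) : ℝ := a 1 * x + a 2 * y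
/-- linear part of `q` -/
def q1f (a : Fin 12 → ℝ) (x y : ℝ) : ℝ := a 7 * x + a 8 * y
/-- quadratic part of `p` -/
def p2f (a : Fin 12 → ℝ) (x y : ℝ) : ℝ := a 3 * x ^ 2 + 2 * a 4 * x * y + a 5 * y ^ 2
/-- quadratic part of `q` -/
def q2f (a : Fin 12 → ℝ) (x y : ℝ) : ℝ := a 9 * x ^ 2 + 2 * a 10 * x * y + a 11 * y ^ 2
/-- the polynomial `p` -/
def pf (a : Fin 12 → ℝ) (x y : ℝ) : ℝ := a 0 + p1f a x y + p2f a x y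
/-- the polynomial `q` -/
def qf (a : Fin 12 → ℝ) (x y : ℝ) : ℝ := a 6 + q1f a x y + q2f a x y

/-- the invariant μ₀ -/
def mu0f (a : Fin 12 → ℝ) : ℝ :=
  (a 3 * a 11 - a 5 * a 9) ^ 2 - 4 * (a 3 * a 10 - a 4 * a 9) * (a 4 * a 11 - a 5 * a 10)

/-- the comitant `K`, the Jacobian of `(p₂, q₂)` -/
def Kf (a : Fin 12 → ℝ) (x y : ℝ) : ℝ :=
  (2 * a 3 * x + 2 * a 4 * y) * (2 * a 10 * x + 2 * a 11 * y)
    - (2 * a 4 * x + 2 * a 5 * y) * (2 * a 9 * x + 2 * a 10 * y)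

/-- the comitant `H`: minus the discriminant (in `x²,xy,y²`-coefficients) of
`α·p₂ + β·q₂` evaluated at `α = y`, `β = -x` -/
def Hf (a : Fin 12 → ℝ) (x y : ℝ) : ℝ :=
  -((2 * (a 4 * y - a 10 * x)) ^ 2 - 4 * (a 3 * y - a 9 * x) * (a 5 * y - a 11 * x))

/-- the comitant `C₂ = y·p₂ - x·q₂` -/
def C2f (a : Fin 12 → ℝ) (x y : ℝ) : ℝ := y * p2f a x y - x * q2f a x y

/-- coefficient of `x³` in `C₂` -/
def cc0 (a : Fin 12 → ℝ) : ℝ := -(a 9)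
/-- coefficient of `x²y` in `C₂` -/
def cc1 (a : Fin 12 → ℝ) : ℝ := a 3 - 2 * a 10
/-- coefficient of `xy²` in `C₂` -/
def cc2 (a : Fin 12 → ℝ) : ℝ := 2 * a 4 - a 11
/-- coefficient of `y³` in `C₂` -/
def cc3 (a : Fin 12 → ℝ) : ℝ := a 5

/-- the invariant η, the discriminant of the binary cubic `C₂` -/
def etaf (a : Fin 12 → ℝ) : ℝ :=
  (cc1 a) ^ 2 * (cc2 a) ^ 2 - 4 * cc0 a * (cc2 a) ^ 3 - 4 * (cc1 a) ^ 3 * cc3 a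
    + 18 * cc0 a * cc1 a * cc2 a * cc3 a - 27 * (cc0 a) ^ 2 * (cc3 a) ^ 2

/-- the comitant `M`, twice the Hessian of `C₂` -/
def Mf (a : Fin 12 → ℝ) (x y : ℝ) : ℝ :=
  2 * ((6 * cc0 a * x + 2 * cc1 a * y) * (2 * cc2 a * x + 6 * cc3 a * y)
    - (2 * cc1 a * x + 2 * cc2 a * y) ^ 2)

/-- the comitant `L = 2K - 4H - M` -/
def Lf (a : Fin 12 → ℝ) (x y : ℝ) : ℝ := 2 * Kf a x y - 4 * Hf a x y - Mf a x y
/-- the comitant `N = K + H` -/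
def Nf (a : Fin 12 → ℝ) (x y : ℝ) : ℝ := Kf a x y + Hf a x y
/-- the comitant `R = L + 8K` -/
def Rf (a : Fin 12 → ℝ) (x y : ℝ) : ℝ := Lf a x y + 8 * Kf a x y
/-- the comitant `K₁ = p₁q₂ - p₂q₁` -/
def K1f (a : Fin 12 → ℝ) (x y : ℝ) : ℝ := p1f a x y * q2f a x y - p2f a x y * q1f a x y

/-- `p₂` as a polynomial in `ℂ[x,y]` -/
def p2C (a : Fin 12 → ℝ) : MvPolynomial (Fin 2) ℂ :=
  C (a 3 : ℂ) * X 0 ^ 2 + C (2 * a 4 : ℂ) * X 0 * X 1 + C (a 5 : ℂ) * X 1 ^ 2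
/-- `q₂` as a polynomial in `ℂ[x,y]` -/
def q2C (a : Fin 12 → ℝ) : MvPolynomial (Fin 2) ℂ :=
  C (a 9 : ℂ) * X 0 ^ 2 + C (2 * a 10 : ℂ) * X 0 * X 1 + C (a 11 : ℂ) * X 1 ^ 2

/-- `d` is a greatest common divisor of `p` and `q` -/
def IsGcdOf (d p q : MvPolynomial (Fin 2) ℂ) : Prop :=
  d ∣ p ∧ d ∣ q ∧ ∀ e : MvPolynomial (Fin 2) ℂ, e ∣ p → e ∣ q → e ∣ d

/-- the cubic form `C₂` regarded over `ℂ` -/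
def C2c (a : Fin 12 → ℝ) (x y : ℂ) : ℂ :=
  (cc0 a : ℂ) * x ^ 3 + (cc1 a : ℂ) * x ^ 2 * y + (cc2 a : ℂ) * x * y ^ 2 + (cc3 a : ℂ) * y ^ 3

/-- the complex linear form `b·x + c·y` is proportional to a real linear form -/
def RealProp (b c : ℂ) : Prop := ∃ (l : ℂ) (r s : ℝ), l ≠ 0 ∧ b = l * (r : ℂ) ∧ c = l * (s : ℂ)

/-- coefficient vector of the translated system `p(x+α, y+β), q(x+α, y+β)` -/
def rT (a : Fin 12 → ℝ) (α β : ℝ) : Fin 12 → ℝ :=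
  ![a 0 + a 1 * α + a 2 * β + a 3 * α ^ 2 + 2 * a 4 * α * β + a 5 * β ^ 2,
    a 1 + 2 * a 3 * α + 2 * a 4 * β,
    a 2 + 2 * a 4 * α + 2 * a 5 * β,
    a 3, a 4, a 5,
    a 6 + a 7 * α + a 8 * β + a 9 * α ^ 2 + 2 * a 10 * α * β + a 11 * β ^ 2,
    a 7 + 2 * a 9 * α + 2 * a 10 * β,
    a 8 + 2 * a 10 * α + 2 * a 11 * β,
    a 9, a 10, a 11]

/-- binary forms in `x = X 0`, `y = X 1` with real coefficients -/
abbrev R2 := MvPolynomial (Fin 2) ℝ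

/-- ∂/∂x -/
def pdx (f : R2) : R2 := pderiv 0 f
/-- ∂/∂y -/
def pdy (f : R2) : R2 := pderiv 1 f
/-- the Jacobian of two binary forms -/
def jacobP (f g : R2) : R2 := pdx f * pdy g - pdy f * pdx g
/-- the second transvectant `(f,g)⁽²⁾` -/
def transv2 (f g : R2) : R2 :=
  pdx (pdx f) * pdy (pdy g) - 2 * pdx (pdy f) * pdx (pdy g) + pdy (pdy f) * pdx (pdx g)

/-- `p₁` as a binary form -/
def p1P (a : Fin 12 → ℝ) : R2 := C (a 1) * X 0 + C (a 2) * X 1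
/-- `q₁` as a binary form -/
def q1P (a : Fin 12 → ℝ) : R2 := C (a 7) * X 0 + C (a 8) * X 1
/-- `p₂` as a binary form -/
def p2P (a : Fin 12 → ℝ) : R2 := C (a 3) * X 0 ^ 2 + C (2 * a 4) * X 0 * X 1 + C (a 5) * X 1 ^ 2
/-- `q₂` as a binary form -/
def q2P (a : Fin 12 → ℝ) : R2 := C (a 9) * X 0 ^ 2 + C (2 * a 10) * X 0 * X 1 + C (a 11) * X 1 ^ 2
/-- `C₀ = y·p₀ - x·q₀` -/
def C0P (a : Fin 12 → ℝ) : R2 := C (a 0) * X 1 - C (a 6) * X 0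
/-- `C₁ = y·p₁ - x·q₁` -/
def C1P (a : Fin 12 → ℝ) : R2 := X 1 * p1P a - X 0 * q1P a
/-- `C₂ = y·p₂ - x·q₂` -/
def C2P (a : Fin 12 → ℝ) : R2 := X 1 * p2P a - X 0 * q2P a
/-- the comitant `K` as a binary form -/
def KP (a : Fin 12 → ℝ) : R2 := jacobP (p2P a) (q2P a)
/-- the comitant `M` (twice the Hessian of `C₂`) as a binary form -/
def MP (a : Fin 12 → ℝ) : R2 :=
  2 * (pdx (pdx (C2P a)) * pdy (pdy (C2P a)) - (pdx (pdy (C2P a))) ^ 2)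
/-- the comitant `H` as a binary form -/
def HP (a : Fin 12 → ℝ) : R2 :=
  -((2 * (C (a 4) * X 1 - C (a 10) * X 0)) ^ 2
    - 4 * (C (a 3) * X 1 - C (a 9) * X 0) * (C (a 5) * X 1 - C (a 11) * X 0))
/-- the comitant `L = 2K - 4H - M` as a binary form -/
def LP (a : Fin 12 → ℝ) : R2 := 2 * KP a - 4 * HP a - MP a
/-- the comitant `K₁ = p₁q₂ - p₂q₁` as a binary form -/
def K1P (a : Fin 12 → ℝ) : R2 := p1P a * q2P a - p2P a * q1P a
/-- the invariant `D₁ = a10 + b01` -/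
def D1v (a : Fin 12 → ℝ) : ℝ := a 1 + a 8
/-- the comitant `D₂ = ∂p₂/∂x + ∂q₂/∂y` -/
def D2P (a : Fin 12 → ℝ) : R2 := pdx (p2P a) + pdy (q2P a)
/-- `J₁ = Jacob(C₀, D₂)` -/
def J1P (a : Fin 12 → ℝ) : R2 := jacobP (C0P a) (D2P a)
/-- `J₂ = Jacob(C₀, C₂)` -/
def J2P (a : Fin 12 → ℝ) : R2 := jacobP (C0P a) (C2P a)
/-- `J₃ = Discrim(C₁)`: for `C₁ = -b10·x² + (a10-b01)·xy + a01·y²` this is `B² - 4AC` -/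
def J3v (a : Fin 12 → ℝ) : ℝ := (a 1 - a 8) ^ 2 + 4 * a 7 * a 2
/-- `J₄ = Jacob(C₁, D₂)` -/
def J4P (a : Fin 12 → ℝ) : R2 := jacobP (C1P a) (D2P a)
/-- the invariant `κ = (M,K)⁽²⁾` (a constant binary form) -/
def kappaP (a : Fin 12 → ℝ) : R2 := transv2 (MP a) (KP a)
/-- the invariant `κ₁ = (M,C₁)⁽²⁾` (a constant binary form) -/
def kappa1P (a : Fin 12 → ℝ) : R2 := transv2 (MP a) (C1P a)
/-- the invariant `κ₂ = -J₁` -/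
def kappa2f (a : Fin 12 → ℝ) : ℝ :=
  -((-(a 6)) * (2 * a 4 + 2 * a 11) - a 0 * (2 * a 3 + 2 * a 10))
/-- `ζ = M - 2K` -/
def zetaP (a : Fin 12 → ℝ) : R2 := MP a - 2 * KP a
/-- the comitant `K₂ = 4·Jacob(J₂,ζ) + 3·Jacob(C₁,ζ)·D₁ - ζ·(16J₁ + 3J₃ + 3D₁²)` -/
def K2P (a : Fin 12 → ℝ) : R2 :=
  4 * jacobP (J2P a) (zetaP a) + C (3 * D1v a) * jacobP (C1P a) (zetaP a)
    - zetaP a * (16 * J1P a + C (3 * J3v a + 3 * (D1v a) ^ 2))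
/-- the comitant `K₃ = 2C₂²(2J₁-3J₃) + C₂(3C₀K - 2C₁J₄) + 2K₁(C₁D₂ + 3K₁)` -/
def K3P (a : Fin 12 → ℝ) : R2 :=
  2 * (C2P a) ^ 2 * (2 * J1P a - C (3 * J3v a))
    + C2P a * (3 * C0P a * KP a - 2 * C1P a * J4P a)
    + 2 * K1P a * (C1P a * D2P a + 3 * K1P a)

/-- polynomials in the 12 coefficient variables (indices 0–11) and `x = X 12`, `y = X 13` -/
abbrev R14 := MvPolynomial (Fin 14) ℝ

/-- the differential operator `L₁` -/
def L1op (f : R14) : R14 :=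
  2 * X 0 * pderiv 1 f + X 1 * pderiv 3 f + C (1/2 : ℝ) * X 2 * pderiv 4 f
    + 2 * X 6 * pderiv 7 f + X 7 * pderiv 9 f + C (1/2 : ℝ) * X 8 * pderiv 10 f
/-- the differential operator `L₂` -/
def L2op (f : R14) : R14 :=
  2 * X 0 * pderiv 2 f + X 2 * pderiv 5 f + C (1/2 : ℝ) * X 1 * pderiv 4 f
    + 2 * X 6 * pderiv 8 f + X 8 * pderiv 11 f + C (1/2 : ℝ) * X 7 * pderiv 10 f
/-- the differential operator `𝓛 = x·L₂ - y·L₁` -/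
def LLop (f : R14) : R14 := X 12 * L2op f - X 13 * L1op f

/-- `μ₀` as an element of `ℝ[a₀₀,…,b₀₂,x,y]` -/
def mu0P : R14 :=
  (X 3 * X 11 - X 5 * X 9) ^ 2 - 4 * (X 3 * X 10 - X 4 * X 9) * (X 4 * X 11 - X 5 * X 10)

/-- `μᵢ = 𝓛⁽ⁱ⁾(μ₀)/i!` -/
def muP (i : ℕ) : R14 := ((i.factorial : ℝ)⁻¹) • (LLop^[i] mu0P)

/-- evaluation point assigning the coefficients `a` and the values `x`, `y` -/
def evalAt (a : Fin 12 → ℝ) (x y : ℝ) : Fin 14 → ℝ := fun i =>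
  if h : (i : ℕ) < 12 then a ⟨(i : ℕ), h⟩ else if (i : ℕ) = 12 then x else y

/-- the value `μᵢ(a, x, y)` -/
def muf (i : ℕ) (a : Fin 12 → ℝ) (x y : ℝ) : ℝ := eval (evalAt a x y) (muP i)

/-- complex evaluation point: coefficients `a` (cast to `ℂ`) and complex values `x`, `y` -/
def evalAtC (a : Fin 12 → ℝ) (x y : ℂ) : Fin 14 → ℂ := fun i =>
  if h : (i : ℕ) < 12 then ((a ⟨(i : ℕ), h⟩ : ℝ) : ℂ) else if (i : ℕ) = 12 then x else y

/-- the value of `μᵢ` extended to complex arguments -/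
def mufC (i : ℕ) (a : Fin 12 → ℝ) (x y : ℂ) : ℂ := aeval (evalAtC a x y) (muP i)

/-- the homogenization `P(X,Y,Z) = Z²·p(X/Z,Y/Z)` over `ℂ` -/
def PfC (a : Fin 12 → ℝ) (Xv Yv Zv : ℂ) : ℂ :=
  (a 0 : ℂ) * Zv ^ 2 + ((a 1 : ℂ) * Xv + (a 2 : ℂ) * Yv) * Zv
    + ((a 3 : ℂ) * Xv ^ 2 + 2 * (a 4 : ℂ) * Xv * Yv + (a 5 : ℂ) * Yv ^ 2)
/-- the homogenization `Q(X,Y,Z) = Z²·q(X/Z,Y/Z)` over `ℂ` -/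
def QfC (a : Fin 12 → ℝ) (Xv Yv Zv : ℂ) : ℂ :=
  (a 6 : ℂ) * Zv ^ 2 + ((a 7 : ℂ) * Xv + (a 8 : ℂ) * Yv) * Zv
    + ((a 9 : ℂ) * Xv ^ 2 + 2 * (a 10 : ℂ) * Xv * Yv + (a 11 : ℂ) * Yv ^ 2)

/-- `b` is the coefficient vector `r_g(a)` of the system transformed by
`g ∈ GL(2,ℝ)` with matrix `m` and inverse matrix `n`:
`(p̃,q̃)(x̃,ỹ) = m·(p,q)(g⁻¹(x̃,ỹ))`. -/
def IsTransformed (m n : Matrix (Fin 2) (Fin 2) ℝ) (a b : Fin 12 → ℝ) : Prop :=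
  m * n = 1 ∧ ∀ x y : ℝ,
    pf b x y = m 0 0 * pf a (n 0 0 * x + n 0 1 * y) (n 1 0 * x + n 1 1 * y)
               + m 0 1 * qf a (n 0 0 * x + n 0 1 * y) (n 1 0 * x + n 1 1 * y)
    ∧ qf b x y = m 1 0 * pf a (n 0 0 * x + n 0 1 * y) (n 1 0 * x + n 1 1 * y)
               + m 1 1 * qf a (n 0 0 * x + n 0 1 * y) (n 1 0 * x + n 1 1 * y)

/-- `(P2, Q2)` is the pair of degree-2 homogeneous parts of the system transformed by
`g ∈ GL(2,ℝ)` with matrix `m` and inverse matrix `n`. -/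
def Quad2Transformed (m n : Matrix (Fin 2) (Fin 2) ℝ) (a : Fin 12 → ℝ)
    (P2 Q2 : ℝ → ℝ → ℝ) : Prop :=
  m * n = 1 ∧ ∀ x y : ℝ,
    P2 x y = m 0 0 * p2f a (n 0 0 * x + n 0 1 * y) (n 1 0 * x + n 1 1 * y)
               + m 0 1 * q2f a (n 0 0 * x + n 0 1 * y) (n 1 0 * x + n 1 1 * y)
    ∧ Q2 x y = m 1 0 * p2f a (n 0 0 * x + n 0 1 * y) (n 1 0 * x + n 1 1 * y)
               + m 1 1 * q2f a (n 0 0 * x + n 0 1 * y) (n 1 0 * x + n 1 1 * y)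


def cub (c0 c1 c2 c3 x y : ℝ) : ℝ := c0*x^3 + c1*x^2*y + c2*x*y^2 + c3*y^3
def dsc (c0 c1 c2 c3 : ℝ) : ℝ :=
  c1^2*c2^2 - 4*c0*c2^3 - 4*c1^3*c3 + 18*c0*c1*c2*c3 - 27*c0^2*c3^2
def hss (c0 c1 c2 c3 x y : ℝ) : ℝ :=
  2*((6*c0*x + 2*c1*y)*(2*c2*x + 6*c3*y) - (2*c1*x + 2*c2*y)^2)

def t0 (c0 c1 c2 c3 A B C D : ℝ) : ℝ := c0*A^3 + c1*A^2*C + c2*A*C^2 + c3*C^3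
def t1 (c0 c1 c2 c3 A B C D : ℝ) : ℝ :=
  3*c0*A^2*B + c1*(A^2*D + 2*A*B*C) + c2*(2*A*C*D + B*C^2) + 3*c3*C^2*D
def t2 (c0 c1 c2 c3 A B C D : ℝ) : ℝ :=
  3*c0*A*B^2 + c1*(B^2*C + 2*A*B*D) + c2*(A*D^2 + 2*B*C*D) + 3*c3*C*D^2
def t3 (c0 c1 c2 c3 A B C D : ℝ) : ℝ := c0*B^3 + c1*B^2*D + c2*B*D^2 + c3*D^3

lemma cub_subst (c0 c1 c2 c3 A B C D x y : ℝ) :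
    cub c0 c1 c2 c3 (A*x+B*y) (C*x+D*y)
      = cub (t0 c0 c1 c2 c3 A B C D) (t1 c0 c1 c2 c3 A B C D)
          (t2 c0 c1 c2 c3 A B C D) (t3 c0 c1 c2 c3 A B C D) x y := by
  simp only [cub, t0, t1, t2, t3]; ring

lemma dsc_t (c0 c1 c2 c3 A B C D : ℝ) :
    dsc (t0 c0 c1 c2 c3 A B C D) (t1 c0 c1 c2 c3 A B C D)
        (t2 c0 c1 c2 c3 A B C D) (t3 c0 c1 c2 c3 A B C D)
      = (A*D - B*C)^6 * dsc c0 c1 c2 c3 := by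
  simp only [dsc, t0, t1, t2, t3]; ring

lemma hss_t (c0 c1 c2 c3 A B C D x y : ℝ) :
    hss (t0 c0 c1 c2 c3 A B C D) (t1 c0 c1 c2 c3 A B C D)
        (t2 c0 c1 c2 c3 A B C D) (t3 c0 c1 c2 c3 A B C D) x y
      = (A*D - B*C)^2 * hss c0 c1 c2 c3 (A*x+B*y) (C*x+D*y) := by
  simp only [hss, t0, t1, t2, t3]; ring

lemma dsc_smul (m c0 c1 c2 c3 : ℝ) : dsc (m*c0) (m*c1) (m*c2) (m*c3) = m^4 * dsc c0 c1 c2 c3 := by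
  simp only [dsc]; ring

lemma hss_smul (m c0 c1 c2 c3 x y : ℝ) :
    hss (m*c0) (m*c1) (m*c2) (m*c3) x y = m^2 * hss c0 c1 c2 c3 x y := by
  simp only [hss]; ring

lemma cub_ext {c0 c1 c2 c3 d0 d1 d2 d3 : ℝ}
    (h : ∀ x y : ℝ, cub c0 c1 c2 c3 x y = cub d0 d1 d2 d3 x y) :
    c0 = d0 ∧ c1 = d1 ∧ c2 = d2 ∧ c3 = d3 := by
  have h1 := h 1 0; have h2 := h 0 1; have h3 := h 1 1; have h4 := h 1 (-1)
  simp only [cub] at h1 h2 h3 h4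
  norm_num at h1 h2 h3 h4
  refine ⟨by linarith, by linarith, by linarith, by linarith⟩



private lemma cubic_root_pos (c0 c1 c2 c3 : ℝ) (h : 0 < c0) :
    ∃ r : ℝ, c0*r^3 + c1*r^2 + c2*r + c3 = 0 := by
  obtain ⟨M, hM⟩ : ∃ M : ℝ, M = (1 + |c1| + |c2| + |c3|)/c0 + 1 := ⟨_, rfl⟩
  set f : ℝ → ℝ := fun t => c0*t^3 + c1*t^2 + c2*t + c3 with hf
  have hcont : Continuous f := by fun_prop
  have hM1 : 1 ≤ M := by
    have h0 : 0 < (1 + |c1| + |c2| + |c3|)/c0 := by positivity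
    linarith
  have hMsq : M ≤ M^2 := by nlinarith
  have hcM : 1 + |c1| + |c2| + |c3| < c0 * M := by
    rw [hM, mul_add, mul_one, mul_div_cancel₀ _ (ne_of_gt h)]
    linarith
  have h1 : 0 < f M := by
    have b1 : -(|c1|) ≤ c1 := neg_abs_le c1
    have b2 : -(|c2|) ≤ c2 := neg_abs_le c2
    have b3 : -(|c3|) ≤ c3 := neg_abs_le c3
    simp only [hf]
    nlinarith [abs_nonneg c1, abs_nonneg c2, abs_nonneg c3, sq_nonneg M]
  have h2 : f (-M) < 0 := by
    have b1 : c1 ≤ |c1| := le_abs_self c1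
    have b2 : -(|c2|) ≤ c2 := neg_abs_le c2
    have b3 : c3 ≤ |c3| := le_abs_self c3
    have e4 : (1 + |c1|+|c2|+|c3|)*M^2 < (c0*M)*M^2 := by nlinarith [sq_nonneg M]
    simp only [hf]
    nlinarith [abs_nonneg c1, abs_nonneg c2, abs_nonneg c3, sq_nonneg M]
  have hsub := intermediate_value_Icc (by linarith : (-M) ≤ M) hcont.continuousOn
  have h0mem : (0:ℝ) ∈ Set.Icc (f (-M)) (f M) := ⟨le_of_lt h2, le_of_lt h1⟩
  obtain ⟨r, _, hr⟩ := hsub h0mem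
  exact ⟨r, hr⟩

lemma cubic_root (c0 c1 c2 c3 : ℝ) (h : c0 ≠ 0) :
    ∃ r : ℝ, c0*r^3 + c1*r^2 + c2*r + c3 = 0 := by
  rcases lt_or_gt_of_ne h with hneg | hpos
  · obtain ⟨r, hr⟩ := cubic_root_pos (-c0) (-c1) (-c2) (-c3) (by linarith)
    exact ⟨r, by linarith⟩
  · exact cubic_root_pos c0 c1 c2 c3 hpos


def Eqv (c0 c1 c2 c3 e0 e1 e2 e3 : ℝ) : Prop :=
  ∃ A B C D μ : ℝ, A*D - B*C ≠ 0 ∧ μ ≠ 0 ∧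
    ∀ x y : ℝ, μ * cub c0 c1 c2 c3 (A*x+B*y) (C*x+D*y) = cub e0 e1 e2 e3 x y

lemma Eqv_trans {c0 c1 c2 c3 d0 d1 d2 d3 e0 e1 e2 e3 : ℝ}
    (h1 : Eqv c0 c1 c2 c3 d0 d1 d2 d3) (h2 : Eqv d0 d1 d2 d3 e0 e1 e2 e3) :
    Eqv c0 c1 c2 c3 e0 e1 e2 e3 := by
  obtain ⟨A, B, C, D, μ, hd, hμ, hf⟩ := h1
  obtain ⟨A', B', C', D', μ', hd', hμ', hf'⟩ := h2
  refine ⟨A*A'+B*C', A*B'+B*D', C*A'+D*C', C*B'+D*D', μ*μ', ?_, mul_ne_zero hμ hμ', ?_⟩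
  · have : (A*A'+B*C')*(C*B'+D*D') - (A*B'+B*D')*(C*A'+D*C')
        = (A*D - B*C)*(A'*D'-B'*C') := by ring
    rw [this]; exact mul_ne_zero hd hd'
  · intro x y
    have hstep1 := hf (A'*x+B'*y) (C'*x+D'*y)
    have hstep2 := hf' x y
    calc μ*μ' * cub c0 c1 c2 c3 ((A*A'+B*C')*x+(A*B'+B*D')*y) ((C*A'+D*C')*x+(C*B'+D*D')*y)
        = μ' * (μ * cub c0 c1 c2 c3 (A*(A'*x+B'*y)+B*(C'*x+D'*y)) (C*(A'*x+B'*y)+D*(C'*x+D'*y))) := by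
          ring_nf
      _ = μ' * cub d0 d1 d2 d3 (A'*x+B'*y) (C'*x+D'*y) := by rw [hstep1]
      _ = cub e0 e1 e2 e3 x y := hstep2

/-- three distinct roots implies equivalent to x²y - xy² -/
lemma equiv_of_three_roots (c0 c1 c2 c3 r s t : ℝ) (h0 : c0 ≠ 0)
    (hrs : r ≠ s) (hrt : r ≠ t) (hst : s ≠ t)
    (hfac : ∀ x y : ℝ, cub c0 c1 c2 c3 x y = c0*(x - r*y)*(x - s*y)*(x - t*y)) :
    Eqv c0 c1 c2 c3 0 1 (-1) 0 := by
  have hst' : s - t ≠ 0 := sub_ne_zero.mpr hst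
  have hrt' : r - t ≠ 0 := sub_ne_zero.mpr hrt
  have hsr' : s - r ≠ 0 := sub_ne_zero.mpr (Ne.symm hrs)
  refine ⟨s/(s-t), -r/(r-t), 1/(s-t), -1/(r-t),
    ((s-t)*(r-t))/(c0*(s-r)^2), ?_, ?_, ?_⟩
  · have : s/(s-t) * (-1/(r-t)) - (-r/(r-t)) * (1/(s-t)) = (r-s)/((s-t)*(r-t)) := by
      field_simp; ring
    rw [this]
    exact div_ne_zero (sub_ne_zero.mpr hrs) (mul_ne_zero hst' hrt')
  · exact div_ne_zero (mul_ne_zero hst' hrt') (mul_ne_zero h0 (pow_ne_zero 2 hsr'))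
  · intro x y
    rw [hfac]
    simp only [cub]
    field_simp
    ring
lemma dsc_key (c0 c1 c2 c3 r : ℝ) (hroot : c0*r^3 + c1*r^2 + c2*r + c3 = 0) :
    dsc c0 c1 c2 c3
      = (c0*r^2 + (c1 + r*c0)*r + (c2 + r*c1 + r^2*c0))^2
        * ((c1 + r*c0)^2 - 4*c0*(c2 + r*c1 + r^2*c0)) := by
  have h3 : c3 = -(r*(c2 + r*c1 + r^2*c0)) := by linear_combination hroot
  rw [h3]; simp only [dsc]; ring

lemma fwdI_monic (c0 c1 c2 c3 : ℝ) (h0 : c0 ≠ 0) (hd : 0 < dsc c0 c1 c2 c3) :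
    Eqv c0 c1 c2 c3 0 1 (-1) 0 := by
  obtain ⟨r, hroot⟩ := cubic_root c0 c1 c2 c3 h0
  obtain ⟨b, hb⟩ : ∃ b : ℝ, b = c1 + r*c0 := ⟨_, rfl⟩
  obtain ⟨cq, hcq⟩ : ∃ cq : ℝ, cq = c2 + r*c1 + r^2*c0 := ⟨_, rfl⟩
  have key : dsc c0 c1 c2 c3 = (c0*r^2 + b*r + cq)^2 * (b^2 - 4*c0*cq) := by
    rw [hb, hcq]; exact dsc_key c0 c1 c2 c3 r hroot
  have hΔpos : 0 < b^2 - 4*c0*cq := by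
    by_contra hle
    push_neg at hle
    nlinarith [sq_nonneg (c0*r^2 + b*r + cq)]
  have hhr : c0*r^2 + b*r + cq ≠ 0 := by
    intro hz; rw [hz] at key; simp at key; linarith
  obtain ⟨e, he, hesq⟩ : ∃ e : ℝ, 0 < e ∧ e^2 = b^2 - 4*c0*cq :=
    ⟨Real.sqrt (b^2 - 4*c0*cq), Real.sqrt_pos.mpr hΔpos, Real.sq_sqrt hΔpos.le⟩
  obtain ⟨s, hs⟩ : ∃ s : ℝ, s = (-b + e)/(2*c0) := ⟨_, rfl⟩
  obtain ⟨t, ht⟩ : ∃ t : ℝ, t = (-b - e)/(2*c0) := ⟨_, rfl⟩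
  have hsum : c0*(s+t) = -(c1 + r*c0) := by rw [hs, ht, ← hb]; field_simp; ring
  have hprod : c0*(s*t) = c2 + r*c1 + r^2*c0 := by
    rw [hs, ht, ← hcq]; field_simp; linear_combination -hesq
  have hst : s ≠ t := by
    rw [hs, ht]; intro hEq; field_simp at hEq; linarith
  have hfac : ∀ x y : ℝ, cub c0 c1 c2 c3 x y = c0*(x - r*y)*(x - s*y)*(x - t*y) := by
    intro x y
    simp only [cub]
    linear_combination (x^2*y - r*x*y^2) * hsum + (r*y^3 - x*y^2) * hprod + y^3 * hroot
  have hquadfac : c0*(r - s)*(r - t) = c0*r^2 + b*r + cq := by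
    have h1 : c0*(r-s)*(r-t) = c0*r^2 - (c0*(s+t))*r + c0*(s*t) := by ring
    rw [h1, hsum, hprod, hb, hcq]; ring
  have hrs : r ≠ s := by
    intro hEq; apply hhr; rw [← hquadfac, hEq]; ring
  have hrt : r ≠ t := by
    intro hEq; apply hhr; rw [← hquadfac, hEq]; ring
  exact equiv_of_three_roots c0 c1 c2 c3 r s t h0 hrs hrt hst hfac
lemma equiv_real_times_posquad (c0 c1 c2 c3 r ee κ : ℝ) (h0 : c0 ≠ 0) (hκ : κ ≠ 0)
    (hfac : ∀ x y : ℝ, cub c0 c1 c2 c3 x y = c0*((x - r*y))*((x + ee*y)^2 + (κ*y)^2)) :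
    Eqv c0 c1 c2 c3 1 0 1 0 := by
  obtain ⟨v, hv⟩ : ∃ v : ℝ, v = (-r - ee)/κ := ⟨_, rfl⟩
  have hvκ : v*κ = -r - ee := by rw [hv]; field_simp
  obtain ⟨w, hwdef⟩ : ∃ w : ℝ, w = Real.sqrt (1 + v^2) := ⟨_, rfl⟩
  have hwpos : 0 < w := by rw [hwdef]; positivity
  have hw : w^2 = 1 + v^2 := by rw [hwdef]; exact Real.sq_sqrt (by positivity)
  have hwne : w ≠ 0 := ne_of_gt hwpos
  obtain ⟨A, hA⟩ : ∃ A : ℝ, A = 1/w - ee*v/(κ*w) := ⟨_, rfl⟩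
  obtain ⟨B, hB⟩ : ∃ B : ℝ, B = -v/w - ee/(κ*w) := ⟨_, rfl⟩
  obtain ⟨C, hC⟩ : ∃ C : ℝ, C = v/(κ*w) := ⟨_, rfl⟩
  obtain ⟨D, hD⟩ : ∃ D : ℝ, D = 1/(κ*w) := ⟨_, rfl⟩
  have h2 : ∀ x y : ℝ, (A*x+B*y) + ee*(C*x+D*y) = (x - v*y)/w := by
    intro x y; rw [hA, hB, hC, hD]; field_simp; ring
  have h3 : ∀ x y : ℝ, κ*(C*x+D*y) = (v*x + y)/w := by
    intro x y; rw [hC, hD]; field_simp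
  have h1 : ∀ x y : ℝ, (A*x+B*y) - r*(C*x+D*y) = w*x := by
    intro x y
    have step : (A*x+B*y) - r*(C*x+D*y)
        = ((A*x+B*y) + ee*(C*x+D*y)) + v*(κ*(C*x+D*y)) := by
      linear_combination (-(C*x+D*y)) * hvκ
    rw [step, h2 x y, h3 x y]
    field_simp
    linear_combination (-x) * hw
  have hdet : A*D - B*C = 1/κ := by
    rw [hA, hB, hC, hD]; field_simp; linear_combination (-κ) * hw
  refine ⟨A, B, C, D, 1/(c0*w), ?_, ?_, ?_⟩
  · rw [hdet]; exact one_div_ne_zero hκ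
  · exact one_div_ne_zero (mul_ne_zero h0 hwne)
  · intro x y
    rw [hfac, h1 x y, h2 x y, h3 x y]
    simp only [cub]
    field_simp
    linear_combination (-(x^3 + x*y^2)) * hw

lemma fwdII_monic (c0 c1 c2 c3 : ℝ) (h0 : c0 ≠ 0) (hd : dsc c0 c1 c2 c3 < 0) :
    Eqv c0 c1 c2 c3 1 0 1 0 := by
  obtain ⟨r, hroot⟩ := cubic_root c0 c1 c2 c3 h0
  obtain ⟨b, hb⟩ : ∃ b : ℝ, b = c1 + r*c0 := ⟨_, rfl⟩
  obtain ⟨cq, hcq⟩ : ∃ cq : ℝ, cq = c2 + r*c1 + r^2*c0 := ⟨_, rfl⟩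
  have key : dsc c0 c1 c2 c3 = (c0*r^2 + b*r + cq)^2 * (b^2 - 4*c0*cq) := by
    rw [hb, hcq]; exact dsc_key c0 c1 c2 c3 r hroot
  have hΔneg : 0 < 4*c0*cq - b^2 := by
    by_contra hle
    push_neg at hle
    nlinarith [sq_nonneg (c0*r^2 + b*r + cq)]
  obtain ⟨ee, hee⟩ : ∃ ee : ℝ, ee = b/(2*c0) := ⟨_, rfl⟩
  obtain ⟨κ, hκdef⟩ : ∃ κ : ℝ, κ = Real.sqrt (4*c0*cq - b^2)/(2*c0) := ⟨_, rfl⟩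
  have hκ : κ ≠ 0 := by
    rw [hκdef]
    exact div_ne_zero (ne_of_gt (Real.sqrt_pos.mpr hΔneg)) (by simpa using h0)
  have hκsq : κ^2 = (4*c0*cq - b^2)/(4*c0^2) := by
    rw [hκdef, div_pow, Real.sq_sqrt hΔneg.le]; ring_nf
  have hsum2 : c0*(2*ee) = c1 + r*c0 := by rw [hee, ← hb]; field_simp
  have hprod2 : c0*(ee^2 + κ^2) = c2 + r*c1 + r^2*c0 := by
    rw [hee, ← hcq]
    have : c0*((b/(2*c0))^2 + κ^2) = c0*(b/(2*c0))^2 + c0*κ^2 := by ring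
    rw [this, hκsq]
    field_simp
    ring
  have hfac : ∀ x y : ℝ, cub c0 c1 c2 c3 x y = c0*((x - r*y))*((x + ee*y)^2 + (κ*y)^2) := by
    intro x y
    simp only [cub]
    linear_combination (-(x^2*y) + r*x*y^2) * hsum2 + (r*y^3 - x*y^2) * hprod2 + y^3 * hroot
  exact equiv_real_times_posquad c0 c1 c2 c3 r ee κ h0 hκ hfac
lemma hss_of_cube (c0 c1 c2 c3 L p : ℝ)
    (h : ∀ x y : ℝ, cub c0 c1 c2 c3 x y = L*(x - p*y)^3) :
    ∀ x y : ℝ, hss c0 c1 c2 c3 x y = 0 := by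
  have h' : ∀ x y : ℝ, cub c0 c1 c2 c3 x y = cub L (-3*L*p) (3*L*p^2) (-(L*p^3)) x y := by
    intro x y; rw [h]; simp only [cub]; ring
  obtain ⟨e0, e1, e2, e3⟩ := cub_ext h'
  intro x y
  rw [e0, e1, e2, e3]; simp only [hss]; ring

lemma equiv_double (c0 c1 c2 c3 p q : ℝ) (h0 : c0 ≠ 0) (hpq : p ≠ q)
    (hf : ∀ x y : ℝ, cub c0 c1 c2 c3 x y = c0*(x - p*y)^2*(x - q*y)) :
    Eqv c0 c1 c2 c3 0 1 0 0 := by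
  have hqp : q - p ≠ 0 := sub_ne_zero.mpr (Ne.symm hpq)
  refine ⟨q/(q-p), -p/(q-p), 1/(q-p), -1/(q-p), 1/c0, ?_, one_div_ne_zero h0, ?_⟩
  · have : q/(q-p) * (-1/(q-p)) - (-p/(q-p)) * (1/(q-p)) = -1/(q-p) := by
      field_simp; ring
    rw [this]
    exact div_ne_zero (by norm_num) hqp
  · intro x y
    rw [hf]
    simp only [cub]
    field_simp
    all_goals ring

lemma equiv_cube (c0 c1 c2 c3 L p : ℝ) (hL : L ≠ 0)
    (hfac : ∀ x y : ℝ, cub c0 c1 c2 c3 x y = L*(x - p*y)^3) :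
    Eqv c0 c1 c2 c3 1 0 0 0 := by
  refine ⟨1, p, 0, 1, 1/L, by norm_num, one_div_ne_zero hL, ?_⟩
  intro x y
  rw [hfac]
  simp only [cub]
  field_simp
  all_goals ring

lemma fwdIII_monic (c0 c1 c2 c3 : ℝ) (h0 : c0 ≠ 0) (hd : dsc c0 c1 c2 c3 = 0)
    (hssne : ∃ x y : ℝ, hss c0 c1 c2 c3 x y ≠ 0) :
    Eqv c0 c1 c2 c3 0 1 0 0 := by
  obtain ⟨r, hroot⟩ := cubic_root c0 c1 c2 c3 h0
  obtain ⟨b, hb⟩ : ∃ b : ℝ, b = c1 + r*c0 := ⟨_, rfl⟩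
  obtain ⟨cq, hcq⟩ : ∃ cq : ℝ, cq = c2 + r*c1 + r^2*c0 := ⟨_, rfl⟩
  have key : dsc c0 c1 c2 c3 = (c0*r^2 + b*r + cq)^2 * (b^2 - 4*c0*cq) := by
    rw [hb, hcq]; exact dsc_key c0 c1 c2 c3 r hroot
  by_cases hΔ : b^2 - 4*c0*cq = 0
  · -- double root from the quadratic part being a perfect square
    obtain ⟨ee, hee⟩ : ∃ ee : ℝ, ee = b/(2*c0) := ⟨_, rfl⟩
    have hsum2 : c0*(2*ee) = c1 + r*c0 := by rw [hee, ← hb]; field_simp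
    have hprod3 : c0*(ee^2) = c2 + r*c1 + r^2*c0 := by
      rw [hee, ← hcq]; field_simp; linear_combination hΔ
    have hfac : ∀ x y : ℝ, cub c0 c1 c2 c3 x y = c0*(x - (-ee)*y)^2*(x - r*y) := by
      intro x y
      simp only [cub]
      linear_combination (-(x^2*y) + r*x*y^2) * hsum2 + (r*y^3 - x*y^2) * hprod3 + y^3 * hroot
    by_cases hre : (-ee : ℝ) = r
    · exfalso
      obtain ⟨u, v, huv⟩ := hssne
      apply huv
      apply hss_of_cube c0 c1 c2 c3 c0 r
      intro x y; rw [hfac x y, hre]; ring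
    · exact equiv_double c0 c1 c2 c3 (-ee) r h0 hre hfac
  · -- r is a double root
    have hq : c0*r^2 + b*r + cq = 0 := by
      have h2 : (c0*r^2 + b*r + cq)^2 = 0 := by
        rcases mul_eq_zero.mp (hd ▸ key.symm) with h | h
        · exact h
        · exact absurd h hΔ
      exact pow_eq_zero_iff (by norm_num) |>.mp h2
    obtain ⟨t, htdef⟩ : ∃ t : ℝ, t = -(b/c0) - r := ⟨_, rfl⟩
    have hsum : c0*(r + t) = -(c1 + r*c0) := by rw [htdef, ← hb]; field_simp; ring
    have hprod : c0*(r*t) = c2 + r*c1 + r^2*c0 := by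
      rw [htdef, ← hcq]; field_simp; linear_combination -hq
    have hfac : ∀ x y : ℝ, cub c0 c1 c2 c3 x y = c0*(x - r*y)^2*(x - t*y) := by
      intro x y
      simp only [cub]
      linear_combination (x^2*y - r*x*y^2) * hsum + (r*y^3 - x*y^2) * hprod + y^3 * hroot
    by_cases hrt : r = t
    · exfalso
      obtain ⟨u, v, huv⟩ := hssne
      apply huv
      apply hss_of_cube c0 c1 c2 c3 c0 r
      intro x y; rw [hfac x y, ← hrt]; ring
    · exact equiv_double c0 c1 c2 c3 r t h0 hrt hfac

lemma fwdIV (c0 c1 c2 c3 : ℝ) (hne : ∃ x y : ℝ, cub c0 c1 c2 c3 x y ≠ 0)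
    (hz : ∀ x y : ℝ, hss c0 c1 c2 c3 x y = 0) :
    Eqv c0 c1 c2 c3 1 0 0 0 := by
  have R1 : 3*(c0*c2) = c1^2 := by
    have h := hz 1 0; simp only [hss] at h; nlinarith [h]
  
  have R3 : 3*(c1*c3) = c2^2 := by
    have h := hz 0 1; simp only [hss] at h; nlinarith [h]
  have R2 : 9*(c0*c3) = c1*c2 := by
    have h := hz 1 1; simp only [hss] at h; nlinarith [h]
  by_cases h0 : c0 = 0
  · have hc1 : c1 = 0 := by
      have h' : c1^2 = 0 := by rw [← R1, h0]; ring
      exact pow_eq_zero_iff (by norm_num) |>.mp h'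
    have hc2 : c2 = 0 := by
      have h' : c2^2 = 0 := by rw [← R3, hc1]; ring
      exact pow_eq_zero_iff (by norm_num) |>.mp h'
    have hc3 : c3 ≠ 0 := by
      intro hc3
      obtain ⟨u, v, huv⟩ := hne
      apply huv
      simp only [cub, h0, hc1, hc2, hc3]; ring
    refine ⟨0, 1, 1, 0, 1/c3, by norm_num, one_div_ne_zero hc3, ?_⟩
    intro x y
    simp only [cub, h0, hc1, hc2]
    field_simp
    all_goals ring
  · obtain ⟨p, hp⟩ : ∃ p : ℝ, p = -c1/(3*c0) := ⟨_, rfl⟩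
    have hfac : ∀ x y : ℝ, cub c0 c1 c2 c3 x y = c0*(x - p*y)^3 := by
      intro x y
      rw [hp]
      simp only [cub]
      field_simp
      linear_combination (9*c0*x*y^2 + c1*y^3)*R1 + (3*c0*y^3)*R2
    exact equiv_cube c0 c1 c2 c3 c0 p h0 hfac
lemma mu_cub (μ c0 c1 c2 c3 x y : ℝ) :
    μ * cub c0 c1 c2 c3 x y = cub (μ*c0) (μ*c1) (μ*c2) (μ*c3) x y := by
  simp only [cub]; ring

lemma reduce (c0 c1 c2 c3 : ℝ) (hne : ∃ x y : ℝ, cub c0 c1 c2 c3 x y ≠ 0) :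
    ∃ d0 d1 d2 d3 : ℝ, d0 ≠ 0 ∧ Eqv c0 c1 c2 c3 d0 d1 d2 d3 ∧
      (∃ ν : ℝ, 0 < ν ∧ dsc d0 d1 d2 d3 = ν * dsc c0 c1 c2 c3) ∧
      ((∃ x y : ℝ, hss c0 c1 c2 c3 x y ≠ 0) → (∃ x y : ℝ, hss d0 d1 d2 d3 x y ≠ 0)) := by
  obtain ⟨u, v, huv⟩ := hne
  obtain ⟨δ, hδdef⟩ : ∃ δ : ℝ, δ = u^2 + v^2 := ⟨_, rfl⟩
  have hδ : δ ≠ 0 := by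
    rw [hδdef]
    intro h
    have hu : u = 0 := by nlinarith [sq_nonneg u, sq_nonneg v]
    have hv : v = 0 := by nlinarith [sq_nonneg u, sq_nonneg v]
    apply huv; rw [hu, hv]; simp [cub]
  have hdet : u*u - (-v)*v = δ := by rw [hδdef]; ring
  refine ⟨t0 c0 c1 c2 c3 u (-v) v u, t1 c0 c1 c2 c3 u (-v) v u,
          t2 c0 c1 c2 c3 u (-v) v u, t3 c0 c1 c2 c3 u (-v) v u, ?_, ?_, ?_, ?_⟩
  · have : t0 c0 c1 c2 c3 u (-v) v u = cub c0 c1 c2 c3 u v := by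
      simp only [t0, cub]; all_goals ring
    rw [this]; exact huv
  · exact ⟨u, -v, v, u, 1, by rw [hdet]; exact hδ, one_ne_zero,
      fun x y => by rw [one_mul, cub_subst]⟩
  · refine ⟨δ^6, by positivity, ?_⟩
    rw [dsc_t, hdet]
  · rintro ⟨X, Y, hXY⟩
    refine ⟨(u*X + v*Y)/δ, (u*Y - v*X)/δ, ?_⟩
    rw [hss_t]
    have e1 : u*((u*X + v*Y)/δ) + (-v)*((u*Y - v*X)/δ) = X := by
      field_simp; rw [hδdef]; ring
    have e2 : v*((u*X + v*Y)/δ) + u*((u*Y - v*X)/δ) = Y := by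
      field_simp; rw [hδdef]; ring
    rw [e1, e2, hdet]
    exact mul_ne_zero (pow_ne_zero 2 hδ) hXY

lemma fwdI (c0 c1 c2 c3 : ℝ) (hne : ∃ x y : ℝ, cub c0 c1 c2 c3 x y ≠ 0)
    (hd : 0 < dsc c0 c1 c2 c3) : Eqv c0 c1 c2 c3 0 1 (-1) 0 := by
  obtain ⟨d0, d1, d2, d3, hd0, hEqv, ⟨ν, hν, hdsc⟩, _⟩ := reduce c0 c1 c2 c3 hne
  exact Eqv_trans hEqv (fwdI_monic d0 d1 d2 d3 hd0 (by rw [hdsc]; positivity))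

lemma fwdII (c0 c1 c2 c3 : ℝ) (hne : ∃ x y : ℝ, cub c0 c1 c2 c3 x y ≠ 0)
    (hd : dsc c0 c1 c2 c3 < 0) : Eqv c0 c1 c2 c3 1 0 1 0 := by
  obtain ⟨d0, d1, d2, d3, hd0, hEqv, ⟨ν, hν, hdsc⟩, _⟩ := reduce c0 c1 c2 c3 hne
  refine Eqv_trans hEqv (fwdII_monic d0 d1 d2 d3 hd0 ?_)
  rw [hdsc]
  exact mul_neg_of_pos_of_neg hν hd

lemma fwdIII (c0 c1 c2 c3 : ℝ) (hne : ∃ x y : ℝ, cub c0 c1 c2 c3 x y ≠ 0)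
    (hd : dsc c0 c1 c2 c3 = 0) (hssne : ∃ x y : ℝ, hss c0 c1 c2 c3 x y ≠ 0) :
    Eqv c0 c1 c2 c3 0 1 0 0 := by
  obtain ⟨d0, d1, d2, d3, hd0, hEqv, ⟨ν, hν, hdsc⟩, hhss⟩ := reduce c0 c1 c2 c3 hne
  refine Eqv_trans hEqv (fwdIII_monic d0 d1 d2 d3 hd0 ?_ (hhss hssne))
  rw [hdsc, hd, mul_zero]

lemma rev_main {c0 c1 c2 c3 e0 e1 e2 e3 : ℝ} (h : Eqv c0 c1 c2 c3 e0 e1 e2 e3) :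
    ∃ ν A B C D κ : ℝ, 0 < ν ∧ (A*D - B*C ≠ 0) ∧ κ ≠ 0 ∧
      dsc e0 e1 e2 e3 = ν * dsc c0 c1 c2 c3 ∧
      ∀ x y : ℝ, hss e0 e1 e2 e3 x y = κ * hss c0 c1 c2 c3 (A*x+B*y) (C*x+D*y) := by
  obtain ⟨A, B, C, D, μ, hdet, hμ, hf⟩ := h
  have hext : ∀ x y : ℝ,
      cub (μ * t0 c0 c1 c2 c3 A B C D) (μ * t1 c0 c1 c2 c3 A B C D)
          (μ * t2 c0 c1 c2 c3 A B C D) (μ * t3 c0 c1 c2 c3 A B C D) x y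
        = cub e0 e1 e2 e3 x y := by
    intro x y
    rw [← mu_cub, ← cub_subst]
    exact hf x y
  obtain ⟨he0, he1, he2, he3⟩ := cub_ext hext
  refine ⟨μ^4*(A*D-B*C)^6, A, B, C, D, μ^2*(A*D-B*C)^2, ?_, hdet, ?_, ?_, ?_⟩
  · have h1 : μ^4*(A*D-B*C)^6 ≠ 0 :=
      mul_ne_zero (pow_ne_zero 4 hμ) (pow_ne_zero 6 hdet)
    have h2 : 0 ≤ μ^4*(A*D-B*C)^6 := by positivity
    exact lt_of_le_of_ne h2 (Ne.symm h1)
  · exact mul_ne_zero (pow_ne_zero 2 hμ) (pow_ne_zero 2 hdet)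
  · rw [← he0, ← he1, ← he2, ← he3, dsc_smul, dsc_t]; ring
  · intro x y
    rw [← he0, ← he1, ← he2, ← he3, hss_smul, hss_t]; ring

lemma revI {c0 c1 c2 c3 : ℝ} (h : Eqv c0 c1 c2 c3 0 1 (-1) 0) : 0 < dsc c0 c1 c2 c3 := by
  obtain ⟨ν, A, B, C, D, κ, hν, _, _, hdsc, _⟩ := rev_main h
  have : dsc 0 1 (-1) 0 = 1 := by norm_num [dsc]
  rw [this] at hdsc
  nlinarith

lemma revII {c0 c1 c2 c3 : ℝ} (h : Eqv c0 c1 c2 c3 1 0 1 0) : dsc c0 c1 c2 c3 < 0 := by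
  obtain ⟨ν, A, B, C, D, κ, hν, _, _, hdsc, _⟩ := rev_main h
  have : dsc 1 0 1 0 = -4 := by norm_num [dsc]
  rw [this] at hdsc
  nlinarith

lemma revIII {c0 c1 c2 c3 : ℝ} (h : Eqv c0 c1 c2 c3 0 1 0 0) :
    dsc c0 c1 c2 c3 = 0 ∧ ∃ x y : ℝ, hss c0 c1 c2 c3 x y ≠ 0 := by
  obtain ⟨ν, A, B, C, D, κ, hν, _, hκ, hdsc, hhss⟩ := rev_main h
  constructor
  · have : dsc 0 1 0 0 = 0 := by norm_num [dsc]
    rw [this] at hdsc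
    have := hν.ne'
    field_simp at hdsc
    exact (mul_eq_zero.mp hdsc.symm).resolve_left this
  · refine ⟨A*1 + B*0, C*1 + D*0, ?_⟩
    intro hz
    have := hhss 1 0
    rw [hz, mul_zero] at this
    simp only [hss] at this
    norm_num at this
/-- surjectivity transfer for case IV -/
lemma revIV {c0 c1 c2 c3 : ℝ} (h : Eqv c0 c1 c2 c3 1 0 0 0) :
    ∀ x y : ℝ, hss c0 c1 c2 c3 x y = 0 := by
  obtain ⟨ν, A, B, C, D, κ, hν, hdet, hκ, hdsc, hhss⟩ := rev_main h
  intro X Y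
  have key := hhss ((D*X - B*Y)/(A*D-B*C)) ((A*Y - C*X)/(A*D-B*C))
  have hz : hss 1 0 0 0 ((D*X - B*Y)/(A*D-B*C)) ((A*Y - C*X)/(A*D-B*C)) = 0 := by
    simp only [hss]; ring
  rw [hz] at key
  have e1 : A*((D*X - B*Y)/(A*D-B*C)) + B*((A*Y - C*X)/(A*D-B*C)) = X := by
    field_simp; ring
  have e2 : C*((D*X - B*Y)/(A*D-B*C)) + D*((A*Y - C*X)/(A*D-B*C)) = Y := by
    rw [mul_div_assoc', mul_div_assoc', ← add_div, div_eq_iff hdet]; ring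
  rw [e1, e2] at key
  rcases mul_eq_zero.mp key.symm with h | h
  · exact absurd h hκ
  · exact h
lemma C2f_cub (a : Fin 12 → ℝ) (x y : ℝ) :
    C2f a x y = cub (cc0 a) (cc1 a) (cc2 a) (cc3 a) x y := by
  simp only [C2f, p2f, q2f, cub, cc0, cc1, cc2, cc3]; ring

lemma cub_homog (c0 c1 c2 c3 s x y : ℝ) :
    cub c0 c1 c2 c3 (s*x) (s*y) = s^3 * cub c0 c1 c2 c3 x y := by
  simp only [cub]; ring

lemma etaf_dsc (a : Fin 12 → ℝ) : etaf a = dsc (cc0 a) (cc1 a) (cc2 a) (cc3 a) := rfl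

lemma Mf_hss (a : Fin 12 → ℝ) (x y : ℝ) :
    Mf a x y = hss (cc0 a) (cc1 a) (cc2 a) (cc3 a) x y := rfl

lemma qt_key {m n : Matrix (Fin 2) (Fin 2) ℝ} {a : Fin 12 → ℝ} {P2 Q2 : ℝ → ℝ → ℝ}
    (h : Quad2Transformed m n a P2 Q2) :
    (n 0 0 * n 1 1 - n 0 1 * n 1 0 ≠ 0) ∧ (m 0 0 * m 1 1 - m 0 1 * m 1 0 ≠ 0) ∧
    ∀ x y : ℝ, y * P2 x y - x * Q2 x y
      = (m 0 0 * m 1 1 - m 0 1 * m 1 0) *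
          cub (cc0 a) (cc1 a) (cc2 a) (cc3 a) (n 0 0*x + n 0 1*y) (n 1 0*x + n 1 1*y) := by
  obtain ⟨hmn, heq⟩ := h
  have e00 : m 0 0 * n 0 0 + m 0 1 * n 1 0 = 1 := by
    have := congrFun (congrFun hmn 0) 0
    simpa [Matrix.mul_apply, Fin.sum_univ_two, Matrix.one_apply] using this
  have e01 : m 0 0 * n 0 1 + m 0 1 * n 1 1 = 0 := by
    have := congrFun (congrFun hmn 0) 1
    simpa [Matrix.mul_apply, Fin.sum_univ_two, Matrix.one_apply] using this
  have e10 : m 1 0 * n 0 0 + m 1 1 * n 1 0 = 0 := by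
    have := congrFun (congrFun hmn 1) 0
    simpa [Matrix.mul_apply, Fin.sum_univ_two, Matrix.one_apply] using this
  have e11 : m 1 0 * n 0 1 + m 1 1 * n 1 1 = 1 := by
    have := congrFun (congrFun hmn 1) 1
    simpa [Matrix.mul_apply, Fin.sum_univ_two, Matrix.one_apply] using this
  have hdd : (m 0 0 * m 1 1 - m 0 1 * m 1 0) * (n 0 0 * n 1 1 - n 0 1 * n 1 0) = 1 := by
    have hid : (m 0 0 * m 1 1 - m 0 1 * m 1 0) * (n 0 0 * n 1 1 - n 0 1 * n 1 0)
        = (m 0 0 * n 0 0 + m 0 1 * n 1 0) * (m 1 0 * n 0 1 + m 1 1 * n 1 1)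
          - (m 0 0 * n 0 1 + m 0 1 * n 1 1) * (m 1 0 * n 0 0 + m 1 1 * n 1 0) := by ring
    rw [hid, e00, e01, e10, e11]; ring
  have hdm : m 0 0 * m 1 1 - m 0 1 * m 1 0 ≠ 0 := by
    intro hz; rw [hz, zero_mul] at hdd; norm_num at hdd
  have hdn : n 0 0 * n 1 1 - n 0 1 * n 1 0 ≠ 0 := by
    intro hz; rw [hz, mul_zero] at hdd; norm_num at hdd
  have A1 : (m 0 0 * m 1 1 - m 0 1 * m 1 0) * n 0 0 = m 1 1 := by
    linear_combination m 1 1 * e00 - m 0 1 * e10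
  have A2 : (m 0 0 * m 1 1 - m 0 1 * m 1 0) * n 0 1 = -(m 0 1) := by
    linear_combination m 1 1 * e01 - m 0 1 * e11
  have A3 : (m 0 0 * m 1 1 - m 0 1 * m 1 0) * n 1 0 = -(m 1 0) := by
    linear_combination (-(m 1 0)) * e00 + m 0 0 * e10
  have A4 : (m 0 0 * m 1 1 - m 0 1 * m 1 0) * n 1 1 = m 0 0 := by
    linear_combination (-(m 1 0)) * e01 + m 0 0 * e11
  refine ⟨hdn, hdm, ?_⟩
  intro x y
  obtain ⟨hP, hQ⟩ := heq x y
  rw [hP, hQ, ← C2f_cub]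
  simp only [C2f]
  linear_combination
    (p2f a (n 0 0*x + n 0 1*y) (n 1 0*x + n 1 1*y)) * ((-x)*A3 + (-y)*A4)
    + (q2f a (n 0 0*x + n 0 1*y) (n 1 0*x + n 1 1*y)) * (x*A1 + y*A2)

lemma bridge_fwd {a : Fin 12 → ℝ} {e0 e1 e2 e3 : ℝ}
    {m n : Matrix (Fin 2) (Fin 2) ℝ} {P2 Q2 : ℝ → ℝ → ℝ}
    (h : Quad2Transformed m n a P2 Q2)
    (hcub : ∀ x y : ℝ, y * P2 x y - x * Q2 x y = cub e0 e1 e2 e3 x y) :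
    Eqv (cc0 a) (cc1 a) (cc2 a) (cc3 a) e0 e1 e2 e3 := by
  obtain ⟨hdn, hdm, hkey⟩ := qt_key h
  refine ⟨n 0 0, n 0 1, n 1 0, n 1 1, m 0 0 * m 1 1 - m 0 1 * m 1 0, hdn, hdm, ?_⟩
  intro x y
  rw [← hcub x y, hkey x y]
lemma bridge_back {a : Fin 12 → ℝ} {e0 e1 e2 e3 : ℝ}
    (h : Eqv (cc0 a) (cc1 a) (cc2 a) (cc3 a) e0 e1 e2 e3) :
    ∃ (m n : Matrix (Fin 2) (Fin 2) ℝ) (P2 Q2 : ℝ → ℝ → ℝ),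
      Quad2Transformed m n a P2 Q2 ∧
      ∃ al be ga d0 ep ze : ℝ,
        (∀ x y : ℝ, P2 x y = al*x^2 + be*x*y + ga*y^2) ∧
        (∀ x y : ℝ, Q2 x y = d0*x^2 + ep*x*y + ze*y^2) ∧
        -d0 = e0 ∧ al - ep = e1 ∧ be - ze = e2 ∧ ga = e3 := by
  obtain ⟨A, B, C, D, μ, hdet, hμ, hfun⟩ := h
  set δ := A*D - B*C with hδdef
  obtain ⟨m, hm⟩ : ∃ m : Matrix (Fin 2) (Fin 2) ℝ,
      m = !![D/(μ*δ^2), -B/(μ*δ^2); -C/(μ*δ^2), A/(μ*δ^2)] := ⟨_, rfl⟩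
  obtain ⟨n, hn⟩ : ∃ n : Matrix (Fin 2) (Fin 2) ℝ,
      n = !![μ*δ*A, μ*δ*B; μ*δ*C, μ*δ*D] := ⟨_, rfl⟩
  have hm00 : m 0 0 = D/(μ*δ^2) := by rw [hm]; rfl
  have hm01 : m 0 1 = -B/(μ*δ^2) := by rw [hm]; rfl
  have hm10 : m 1 0 = -C/(μ*δ^2) := by rw [hm]; rfl
  have hm11 : m 1 1 = A/(μ*δ^2) := by rw [hm]; rfl
  have hn00 : n 0 0 = μ*δ*A := by rw [hn]; rfl
  have hn01 : n 0 1 = μ*δ*B := by rw [hn]; rfl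
  have hn10 : n 1 0 = μ*δ*C := by rw [hn]; rfl
  have hn11 : n 1 1 = μ*δ*D := by rw [hn]; rfl
  have hmn : m * n = 1 := by
    rw [hm, hn, Matrix.mul_fin_two, Matrix.one_fin_two]
    have g1 : D/(μ*δ^2)*(μ*δ*A) + -B/(μ*δ^2)*(μ*δ*C) = 1 := by
      field_simp; rw [hδdef]; ring
    have g2 : D/(μ*δ^2)*(μ*δ*B) + -B/(μ*δ^2)*(μ*δ*D) = 0 := by field_simp; ring
    have g3 : -C/(μ*δ^2)*(μ*δ*A) + A/(μ*δ^2)*(μ*δ*C) = 0 := by field_simp; ring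
    have g4 : -C/(μ*δ^2)*(μ*δ*B) + A/(μ*δ^2)*(μ*δ*D) = 1 := by
      field_simp; rw [hδdef]; ring
    rw [g1, g2, g3, g4]
  obtain ⟨P2, hP2⟩ : ∃ f : ℝ → ℝ → ℝ, f = fun x y =>
      m 0 0 * p2f a (n 0 0 * x + n 0 1 * y) (n 1 0 * x + n 1 1 * y)
      + m 0 1 * q2f a (n 0 0 * x + n 0 1 * y) (n 1 0 * x + n 1 1 * y) := ⟨_, rfl⟩
  obtain ⟨Q2, hQ2⟩ : ∃ f : ℝ → ℝ → ℝ, f = fun x y =>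
      m 1 0 * p2f a (n 0 0 * x + n 0 1 * y) (n 1 0 * x + n 1 1 * y)
      + m 1 1 * q2f a (n 0 0 * x + n 0 1 * y) (n 1 0 * x + n 1 1 * y) := ⟨_, rfl⟩
  have hQT : Quad2Transformed m n a P2 Q2 := ⟨hmn, fun x y => ⟨by rw [hP2], by rw [hQ2]⟩⟩
  -- quadratic-form representations
  have hPrep : ∀ x y : ℝ, P2 x y
      = (P2 1 0)*x^2 + (P2 1 1 - P2 1 0 - P2 0 1)*x*y + (P2 0 1)*y^2 := by
    intro x y; rw [hP2]; simp only [p2f, q2f]; ring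
  have hQrep : ∀ x y : ℝ, Q2 x y
      = (Q2 1 0)*x^2 + (Q2 1 1 - Q2 1 0 - Q2 0 1)*x*y + (Q2 0 1)*y^2 := by
    intro x y; rw [hQ2]; simp only [p2f, q2f]; ring
  -- the transformed cubic is the target
  have hdm : m 0 0 * m 1 1 - m 0 1 * m 1 0 = 1/(μ^2*δ^3) := by
    rw [hm00, hm01, hm10, hm11]; field_simp; rw [hδdef]; ring
  obtain ⟨_, _, hkey⟩ := qt_key hQT
  have hcub3 : ∀ x y : ℝ, y * P2 x y - x * Q2 x y = cub e0 e1 e2 e3 x y := by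
    intro x y
    rw [hkey x y, hdm, hn00, hn01, hn10, hn11]
    have harg1 : μ*δ*A*x + μ*δ*B*y = (μ*δ)*(A*x+B*y) := by ring
    have harg2 : μ*δ*C*x + μ*δ*D*y = (μ*δ)*(C*x+D*y) := by ring
    rw [harg1, harg2, cub_homog, ← hfun x y]
    field_simp
  have hco : ∀ x y : ℝ, cub (-(Q2 1 0)) (P2 1 0 - (Q2 1 1 - Q2 1 0 - Q2 0 1))
      ((P2 1 1 - P2 1 0 - P2 0 1) - Q2 0 1) (P2 0 1) x y = cub e0 e1 e2 e3 x y := by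
    intro x y
    rw [← hcub3 x y, hPrep x y, hQrep x y]
    simp only [cub]; ring
  obtain ⟨g1, g2, g3, g4⟩ := cub_ext hco
  exact ⟨m, n, P2, Q2, hQT, P2 1 0, P2 1 1 - P2 1 0 - P2 0 1, P2 0 1,
    Q2 1 0, Q2 1 1 - Q2 1 0 - Q2 0 1, Q2 0 1, hPrep, hQrep, g1, g2, g3, g4⟩

/-- Canonical forms at infinity. A system with `C₂ ≢ 0` can be brought by
some `g ∈ GL(2,ℝ)` to exactly one of four canonical shapes of its degree-2 parts, the
case being determined by the sign of `η` and the vanishing of `M`. -/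
theorem canonical_forms_at_infinity (a : Fin 12 → ℝ) (hC2 : ∃ x y : ℝ, C2f a x y ≠ 0) :
    (etaf a > 0 ↔ ∃ (m n : Matrix (Fin 2) (Fin 2) ℝ) (P2 Q2 : ℝ → ℝ → ℝ),
        Quad2Transformed m n a P2 Q2 ∧ ∃ g h : ℝ, ∀ x y : ℝ,
          P2 x y = g * x ^ 2 + (h - 1) * x * y ∧
          Q2 x y = (g - 1) * x * y + h * y ^ 2) ∧
    (etaf a < 0 ↔ ∃ (m n : Matrix (Fin 2) (Fin 2) ℝ) (P2 Q2 : ℝ → ℝ → ℝ),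
        Quad2Transformed m n a P2 Q2 ∧ ∃ g h : ℝ, ∀ x y : ℝ,
          P2 x y = g * x ^ 2 + (h + 1) * x * y ∧
          Q2 x y = -x ^ 2 + g * x * y + h * y ^ 2) ∧
    ((etaf a = 0 ∧ ∃ x y : ℝ, Mf a x y ≠ 0) ↔
      ∃ (m n : Matrix (Fin 2) (Fin 2) ℝ) (P2 Q2 : ℝ → ℝ → ℝ),
        Quad2Transformed m n a P2 Q2 ∧ ∃ g h : ℝ, ∀ x y : ℝ,
          P2 x y = g * x ^ 2 + h * x * y ∧
          Q2 x y = (g - 1) * x * y + h * y ^ 2) ∧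
    ((∀ x y : ℝ, Mf a x y = 0) ↔
      ∃ (m n : Matrix (Fin 2) (Fin 2) ℝ) (P2 Q2 : ℝ → ℝ → ℝ),
        Quad2Transformed m n a P2 Q2 ∧ ∃ g h : ℝ, ∀ x y : ℝ,
          P2 x y = g * x ^ 2 + h * x * y ∧
          Q2 x y = -x ^ 2 + g * x * y + h * y ^ 2) := by
  have hne : ∃ x y : ℝ, cub (cc0 a) (cc1 a) (cc2 a) (cc3 a) x y ≠ 0 := by
    obtain ⟨x, y, hxy⟩ := hC2
    exact ⟨x, y, by rw [← C2f_cub]; exact hxy⟩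
  refine ⟨?_, ?_, ?_, ?_⟩
  · -- case I
    constructor
    · intro hη
      have hEqv := fwdI _ _ _ _ hne (by rw [← etaf_dsc]; exact hη)
      obtain ⟨m, n, P2, Q2, hQT, al, be, ga, d0, ep, ze, hPrep, hQrep, g1, g2, g3, g4⟩ :=
        bridge_back hEqv
      refine ⟨m, n, P2, Q2, hQT, al, ze, fun x y => ⟨?_, ?_⟩⟩
      · rw [hPrep x y]; linear_combination (x*y)*g3 + (y^2)*g4
      · rw [hQrep x y]; linear_combination (-(x^2))*g1 + (-(x*y))*g2
    · rintro ⟨m, n, P2, Q2, hQT, g, h, hsh⟩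
      have hcub : ∀ x y : ℝ, y * P2 x y - x * Q2 x y = cub 0 1 (-1) 0 x y := by
        intro x y
        obtain ⟨h1, h2⟩ := hsh x y
        rw [h1, h2]; simp only [cub]; ring
      have := revI (bridge_fwd hQT hcub)
      rw [etaf_dsc]; exact this
  · -- case II
    constructor
    · intro hη
      have hEqv := fwdII _ _ _ _ hne (by rw [← etaf_dsc]; exact hη)
      obtain ⟨m, n, P2, Q2, hQT, al, be, ga, d0, ep, ze, hPrep, hQrep, g1, g2, g3, g4⟩ :=
        bridge_back hEqv
      refine ⟨m, n, P2, Q2, hQT, al, ze, fun x y => ⟨?_, ?_⟩⟩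
      · rw [hPrep x y]; linear_combination (x*y)*g3 + (y^2)*g4
      · rw [hQrep x y]; linear_combination (-(x^2))*g1 + (-(x*y))*g2
    · rintro ⟨m, n, P2, Q2, hQT, g, h, hsh⟩
      have hcub : ∀ x y : ℝ, y * P2 x y - x * Q2 x y = cub 1 0 1 0 x y := by
        intro x y
        obtain ⟨h1, h2⟩ := hsh x y
        rw [h1, h2]; simp only [cub]; ring
      have := revII (bridge_fwd hQT hcub)
      rw [etaf_dsc]; exact this
  · -- case III
    constructor
    · rintro ⟨hη, X, Y, hM⟩
      have hssne : ∃ x y : ℝ, hss (cc0 a) (cc1 a) (cc2 a) (cc3 a) x y ≠ 0 :=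
        ⟨X, Y, by rw [← Mf_hss]; exact hM⟩
      have hEqv := fwdIII _ _ _ _ hne (by rw [← etaf_dsc]; exact hη) hssne
      obtain ⟨m, n, P2, Q2, hQT, al, be, ga, d0, ep, ze, hPrep, hQrep, g1, g2, g3, g4⟩ :=
        bridge_back hEqv
      refine ⟨m, n, P2, Q2, hQT, al, ze, fun x y => ⟨?_, ?_⟩⟩
      · rw [hPrep x y]; linear_combination (x*y)*g3 + (y^2)*g4
      · rw [hQrep x y]; linear_combination (-(x^2))*g1 + (-(x*y))*g2
    · rintro ⟨m, n, P2, Q2, hQT, g, h, hsh⟩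
      have hcub : ∀ x y : ℝ, y * P2 x y - x * Q2 x y = cub 0 1 0 0 x y := by
        intro x y
        obtain ⟨h1, h2⟩ := hsh x y
        rw [h1, h2]; simp only [cub]; ring
      obtain ⟨hd, X, Y, hX⟩ := revIII (bridge_fwd hQT hcub)
      exact ⟨by rw [etaf_dsc]; exact hd, X, Y, by rw [Mf_hss]; exact hX⟩
  · -- case IV
    constructor
    · intro hM
      have hz : ∀ x y : ℝ, hss (cc0 a) (cc1 a) (cc2 a) (cc3 a) x y = 0 := by
        intro x y; rw [← Mf_hss]; exact hM x y
      have hEqv := fwdIV _ _ _ _ hne hz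
      obtain ⟨m, n, P2, Q2, hQT, al, be, ga, d0, ep, ze, hPrep, hQrep, g1, g2, g3, g4⟩ :=
        bridge_back hEqv
      refine ⟨m, n, P2, Q2, hQT, al, ze, fun x y => ⟨?_, ?_⟩⟩
      · rw [hPrep x y]; linear_combination (x*y)*g3 + (y^2)*g4
      · rw [hQrep x y]; linear_combination (-(x^2))*g1 + (-(x*y))*g2
    · rintro ⟨m, n, P2, Q2, hQT, g, h, hsh⟩
      have hcub : ∀ x y : ℝ, y * P2 x y - x * Q2 x y = cub 1 0 0 0 x y := by
        intro x y
        obtain ⟨h1, h2⟩ := hsh x y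
        rw [h1, h2]; simp only [cub]; ring
      have hz := revIV (bridge_fwd hQT hcub)
      intro x y
      rw [Mf_hss]; exact hz x y

end QSinf
end
end

section
/- For every a ∈ ℝ^12, the polynomial μ4(a,X,Y) equals the resultant with respect to Z of the homogenizations P(X,Y,Z) = Z²·p(X/Z, Y/Z) and Q(X,Y,Z) = Z²·q(X/Z, Y/Z), regarded as degree-2 polynomials in Z with coefficients in ℝ[X,Y]. -/
open MvPolynomial Finset

noncomputable section

namespace QSinf

namespace QSaux
open MvPolynomial

lemma pderiv_ofNat' (i : Fin 14) (n : ℕ) [n.AtLeastTwo] :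
    pderiv i (no_index (OfNat.ofNat n) : R14) = 0 := by
  rw [show (OfNat.ofNat n : R14) = C (OfNat.ofNat n) from (map_ofNat (C : ℝ →+* R14) n).symm]
  exact pderiv_C

lemma two_LLop (f : R14) : 2 * LLop f =
    X 12 * (4 * X 0 * pderiv 2 f + 2 * X 2 * pderiv 5 f + X 1 * pderiv 4 f
      + 4 * X 6 * pderiv 8 f + 2 * X 8 * pderiv 11 f + X 7 * pderiv 10 f)
    - X 13 * (4 * X 0 * pderiv 1 f + 2 * X 1 * pderiv 3 f + X 2 * pderiv 4 f
      + 4 * X 6 * pderiv 7 f + 2 * X 7 * pderiv 9 f + X 8 * pderiv 10 f) := by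
  have hC : (2 : R14) * C (1/2 : ℝ) = 1 := by
    rw [show (2 : R14) = C (2 : ℝ) from (map_ofNat (C : ℝ →+* R14) 2).symm, ← C_mul]
    norm_num
  unfold LLop L1op L2op
  linear_combination (X 12 * (X 1 * pderiv 4 f + X 7 * pderiv 10 f)
    - X 13 * (X 2 * pderiv 4 f + X 8 * pderiv 10 f)) * hC

lemma LLop_two_mul (f : R14) : LLop (2 * f) = 2 * LLop f := by
  unfold LLop L1op L2op
  simp only [pderiv_mul, pderiv_ofNat', zero_mul, zero_add]
  ring

def x0 : R14 := X 0
def x1 : R14 := X 1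
def x2 : R14 := X 2
def x3 : R14 := X 3
def x4 : R14 := X 4
def x5 : R14 := X 5
def x6 : R14 := X 6
def x7 : R14 := X 7
def x8 : R14 := X 8
def x9 : R14 := X 9
def x10 : R14 := X 10
def x11 : R14 := X 11
def x12 : R14 := X 12
def x13 : R14 := X 13

set_option maxHeartbeats 1000000 in
def G1 : R14 :=
  -(4 * x5 ^ 2 * x7 * x9 * x13)
    + 4 * x4 * x5 * x8 * x9 * x13
    + 8 * x4 * x5 * x7 * x10 * x13
    - 4 * x4 * x5 * x7 * x9 * x12
    + 8 * x4 ^ 2 * x8 * x9 * x12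
    - 8 * x4 ^ 2 * x7 * x11 * x13
    - 8 * x3 * x5 * x8 * x10 * x13
    - 4 * x3 * x5 * x8 * x9 * x12
    + 4 * x3 * x5 * x7 * x11 * x13
    + 8 * x3 * x5 * x7 * x10 * x12
    + 4 * x3 * x4 * x8 * x11 * x13
    - 8 * x3 * x4 * x8 * x10 * x12
    - 4 * x3 * x4 * x7 * x11 * x12
    + 4 * x3 ^ 2 * x8 * x11 * x12
    + 4 * x2 * x5 * x9 * x10 * x13
    + 4 * x2 * x5 * x9 ^ 2 * x12
    - 8 * x2 * x4 * x9 * x11 * x13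
    - 8 * x2 * x4 * x9 * x10 * x12
    + 4 * x2 * x3 * x10 * x11 * x13
    + 8 * x2 * x3 * x10 ^ 2 * x12
    - 4 * x2 * x3 * x9 * x11 * x12
    - 8 * x1 * x5 * x10 ^ 2 * x13
    + 4 * x1 * x5 * x9 * x11 * x13
    - 4 * x1 * x5 * x9 * x10 * x12
    + 8 * x1 * x4 * x10 * x11 * x13
    + 8 * x1 * x4 * x9 * x11 * x12
    - 4 * x1 * x3 * x11 ^ 2 * x13
    - 4 * x1 * x3 * x10 * x11 * x12

set_option maxHeartbeats 1000000 in
def G2 : R14 :=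
  8 * x5 ^ 2 * x7 ^ 2 * x13 ^ 2
    + 16 * x5 ^ 2 * x6 * x9 * x13 ^ 2
    - 16 * x4 * x5 * x7 * x8 * x13 ^ 2
    + 16 * x4 * x5 * x7 ^ 2 * x12 * x13
    - 32 * x4 * x5 * x6 * x10 * x13 ^ 2
    + 32 * x4 * x5 * x6 * x9 * x12 * x13
    - 32 * x4 ^ 2 * x7 * x8 * x12 * x13
    + 32 * x4 ^ 2 * x6 * x11 * x13 ^ 2
    + 32 * x4 ^ 2 * x6 * x9 * x12 ^ 2
    + 8 * x3 * x5 * x8 ^ 2 * x13 ^ 2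
    + 8 * x3 * x5 * x7 ^ 2 * x12 ^ 2
    - 16 * x3 * x5 * x6 * x11 * x13 ^ 2
    - 64 * x3 * x5 * x6 * x10 * x12 * x13
    - 16 * x3 * x5 * x6 * x9 * x12 ^ 2
    + 16 * x3 * x4 * x8 ^ 2 * x12 * x13
    - 16 * x3 * x4 * x7 * x8 * x12 ^ 2
    + 32 * x3 * x4 * x6 * x11 * x12 * x13
    - 32 * x3 * x4 * x6 * x10 * x12 ^ 2
    + 8 * x3 ^ 2 * x8 ^ 2 * x12 ^ 2
    + 16 * x3 ^ 2 * x6 * x11 * x12 ^ 2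
    - 8 * x2 * x5 * x8 * x9 * x13 ^ 2
    - 16 * x2 * x5 * x7 * x10 * x13 ^ 2
    - 24 * x2 * x5 * x7 * x9 * x12 * x13
    - 16 * x2 * x4 * x8 * x9 * x12 * x13
    + 32 * x2 * x4 * x7 * x11 * x13 ^ 2
    + 32 * x2 * x4 * x7 * x10 * x12 * x13
    - 16 * x2 * x4 * x7 * x9 * x12 ^ 2
    - 8 * x2 * x3 * x8 * x11 * x13 ^ 2
    - 16 * x2 * x3 * x8 * x10 * x12 * x13
    - 16 * x2 * x3 * x8 * x9 * x12 ^ 2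
    + 24 * x2 * x3 * x7 * x11 * x12 * x13
    + 32 * x2 * x3 * x7 * x10 * x12 ^ 2
    + 8 * x2 ^ 2 * x9 * x11 * x13 ^ 2
    + 16 * x2 ^ 2 * x9 * x10 * x12 * x13
    + 8 * x2 ^ 2 * x9 ^ 2 * x12 ^ 2
    + 32 * x1 * x5 * x8 * x10 * x13 ^ 2
    + 24 * x1 * x5 * x8 * x9 * x12 * x13
    - 16 * x1 * x5 * x7 * x11 * x13 ^ 2
    - 16 * x1 * x5 * x7 * x10 * x12 * x13
    - 8 * x1 * x5 * x7 * x9 * x12 ^ 2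
    - 16 * x1 * x4 * x8 * x11 * x13 ^ 2
    + 32 * x1 * x4 * x8 * x10 * x12 * x13
    + 32 * x1 * x4 * x8 * x9 * x12 ^ 2
    - 16 * x1 * x4 * x7 * x11 * x12 * x13
    - 24 * x1 * x3 * x8 * x11 * x12 * x13
    - 16 * x1 * x3 * x8 * x10 * x12 ^ 2
    - 8 * x1 * x3 * x7 * x11 * x12 ^ 2
    - 16 * x1 * x2 * x10 * x11 * x13 ^ 2
    - 32 * x1 * x2 * x10 ^ 2 * x12 * x13
    - 16 * x1 * x2 * x9 * x10 * x12 ^ 2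
    + 8 * x1 ^ 2 * x11 ^ 2 * x13 ^ 2
    + 16 * x1 ^ 2 * x10 * x11 * x12 * x13
    + 8 * x1 ^ 2 * x9 * x11 * x12 ^ 2
    + 32 * x0 * x5 * x10 ^ 2 * x13 ^ 2
    - 16 * x0 * x5 * x9 * x11 * x13 ^ 2
    + 32 * x0 * x5 * x9 * x10 * x12 * x13
    + 16 * x0 * x5 * x9 ^ 2 * x12 ^ 2
    - 32 * x0 * x4 * x10 * x11 * x13 ^ 2
    - 64 * x0 * x4 * x9 * x11 * x12 * x13
    - 32 * x0 * x4 * x9 * x10 * x12 ^ 2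
    + 16 * x0 * x3 * x11 ^ 2 * x13 ^ 2
    + 32 * x0 * x3 * x10 * x11 * x12 * x13
    + 32 * x0 * x3 * x10 ^ 2 * x12 ^ 2
    - 16 * x0 * x3 * x9 * x11 * x12 ^ 2

set_option maxHeartbeats 1000000 in
def G3 : R14 :=
  -(96 * x5 ^ 2 * x6 * x7 * x13 ^ 3)
    + 96 * x4 * x5 * x6 * x8 * x13 ^ 3
    - 288 * x4 * x5 * x6 * x7 * x12 * x13 ^ 2
    + 192 * x4 ^ 2 * x6 * x8 * x12 * x13 ^ 2
    - 192 * x4 ^ 2 * x6 * x7 * x12 ^ 2 * x13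
    + 96 * x3 * x5 * x6 * x8 * x12 * x13 ^ 2
    - 96 * x3 * x5 * x6 * x7 * x12 ^ 2 * x13
    + 288 * x3 * x4 * x6 * x8 * x12 ^ 2 * x13
    - 96 * x3 * x4 * x6 * x7 * x12 ^ 3
    + 96 * x3 ^ 2 * x6 * x8 * x12 ^ 3
    + 48 * x2 * x5 * x7 * x8 * x13 ^ 3
    + 48 * x2 * x5 * x7 ^ 2 * x12 * x13 ^ 2
    + 96 * x2 * x5 * x6 * x10 * x13 ^ 3
    + 96 * x2 * x5 * x6 * x9 * x12 * x13 ^ 2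
    + 96 * x2 * x4 * x7 * x8 * x12 * x13 ^ 2
    + 96 * x2 * x4 * x7 ^ 2 * x12 ^ 2 * x13
    - 192 * x2 * x4 * x6 * x11 * x13 ^ 3
    - 192 * x2 * x4 * x6 * x10 * x12 * x13 ^ 2
    + 48 * x2 * x3 * x7 * x8 * x12 ^ 2 * x13
    + 48 * x2 * x3 * x7 ^ 2 * x12 ^ 3
    - 192 * x2 * x3 * x6 * x11 * x12 * x13 ^ 2
    - 288 * x2 * x3 * x6 * x10 * x12 ^ 2 * x13
    - 96 * x2 * x3 * x6 * x9 * x12 ^ 3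
    - 48 * x2 ^ 2 * x7 * x11 * x13 ^ 3
    - 96 * x2 ^ 2 * x7 * x10 * x12 * x13 ^ 2
    - 48 * x2 ^ 2 * x7 * x9 * x12 ^ 2 * x13
    - 48 * x1 * x5 * x8 ^ 2 * x13 ^ 3
    - 48 * x1 * x5 * x7 * x8 * x12 * x13 ^ 2
    + 96 * x1 * x5 * x6 * x11 * x13 ^ 3
    + 288 * x1 * x5 * x6 * x10 * x12 * x13 ^ 2
    + 192 * x1 * x5 * x6 * x9 * x12 ^ 2 * x13
    - 96 * x1 * x4 * x8 ^ 2 * x12 * x13 ^ 2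
    - 96 * x1 * x4 * x7 * x8 * x12 ^ 2 * x13
    + 192 * x1 * x4 * x6 * x10 * x12 ^ 2 * x13
    + 192 * x1 * x4 * x6 * x9 * x12 ^ 3
    - 48 * x1 * x3 * x8 ^ 2 * x12 ^ 2 * x13
    - 48 * x1 * x3 * x7 * x8 * x12 ^ 3
    - 96 * x1 * x3 * x6 * x11 * x12 ^ 2 * x13
    - 96 * x1 * x3 * x6 * x10 * x12 ^ 3
    + 48 * x1 * x2 * x8 * x11 * x13 ^ 3
    + 96 * x1 * x2 * x8 * x10 * x12 * x13 ^ 2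
    + 48 * x1 * x2 * x8 * x9 * x12 ^ 2 * x13
    - 48 * x1 * x2 * x7 * x11 * x12 * x13 ^ 2
    - 96 * x1 * x2 * x7 * x10 * x12 ^ 2 * x13
    - 48 * x1 * x2 * x7 * x9 * x12 ^ 3
    + 48 * x1 ^ 2 * x8 * x11 * x12 * x13 ^ 2
    + 96 * x1 ^ 2 * x8 * x10 * x12 ^ 2 * x13
    + 48 * x1 ^ 2 * x8 * x9 * x12 ^ 3
    - 192 * x0 * x5 * x8 * x10 * x13 ^ 3
    - 192 * x0 * x5 * x8 * x9 * x12 * x13 ^ 2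
    + 96 * x0 * x5 * x7 * x11 * x13 ^ 3
    - 96 * x0 * x5 * x7 * x9 * x12 ^ 2 * x13
    + 96 * x0 * x4 * x8 * x11 * x13 ^ 3
    - 192 * x0 * x4 * x8 * x10 * x12 * x13 ^ 2
    - 288 * x0 * x4 * x8 * x9 * x12 ^ 2 * x13
    + 288 * x0 * x4 * x7 * x11 * x12 * x13 ^ 2
    + 192 * x0 * x4 * x7 * x10 * x12 ^ 2 * x13
    - 96 * x0 * x4 * x7 * x9 * x12 ^ 3
    + 96 * x0 * x3 * x8 * x11 * x12 * x13 ^ 2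
    - 96 * x0 * x3 * x8 * x9 * x12 ^ 3
    + 192 * x0 * x3 * x7 * x11 * x12 ^ 2 * x13
    + 192 * x0 * x3 * x7 * x10 * x12 ^ 3
    + 96 * x0 * x2 * x10 * x11 * x13 ^ 3
    + 192 * x0 * x2 * x10 ^ 2 * x12 * x13 ^ 2
    + 96 * x0 * x2 * x9 * x11 * x12 * x13 ^ 2
    + 288 * x0 * x2 * x9 * x10 * x12 ^ 2 * x13
    + 96 * x0 * x2 * x9 ^ 2 * x12 ^ 3
    - 96 * x0 * x1 * x11 ^ 2 * x13 ^ 3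
    - 288 * x0 * x1 * x10 * x11 * x12 * x13 ^ 2
    - 192 * x0 * x1 * x10 ^ 2 * x12 ^ 2 * x13
    - 96 * x0 * x1 * x9 * x11 * x12 ^ 2 * x13
    - 96 * x0 * x1 * x9 * x10 * x12 ^ 3

set_option maxHeartbeats 1000000 in
def G4 : R14 :=
  384 * x5 ^ 2 * x6 ^ 2 * x13 ^ 4
    + 1536 * x4 * x5 * x6 ^ 2 * x12 * x13 ^ 3
    + 1536 * x4 ^ 2 * x6 ^ 2 * x12 ^ 2 * x13 ^ 2
    + 768 * x3 * x5 * x6 ^ 2 * x12 ^ 2 * x13 ^ 2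
    + 1536 * x3 * x4 * x6 ^ 2 * x12 ^ 3 * x13
    + 384 * x3 ^ 2 * x6 ^ 2 * x12 ^ 4
    - 384 * x2 * x5 * x6 * x8 * x13 ^ 4
    - 384 * x2 * x5 * x6 * x7 * x12 * x13 ^ 3
    - 768 * x2 * x4 * x6 * x8 * x12 * x13 ^ 3
    - 768 * x2 * x4 * x6 * x7 * x12 ^ 2 * x13 ^ 2
    - 384 * x2 * x3 * x6 * x8 * x12 ^ 2 * x13 ^ 2
    - 384 * x2 * x3 * x6 * x7 * x12 ^ 3 * x13
    + 384 * x2 ^ 2 * x6 * x11 * x13 ^ 4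
    + 768 * x2 ^ 2 * x6 * x10 * x12 * x13 ^ 3
    + 384 * x2 ^ 2 * x6 * x9 * x12 ^ 2 * x13 ^ 2
    - 384 * x1 * x5 * x6 * x8 * x12 * x13 ^ 3
    - 384 * x1 * x5 * x6 * x7 * x12 ^ 2 * x13 ^ 2
    - 768 * x1 * x4 * x6 * x8 * x12 ^ 2 * x13 ^ 2
    - 768 * x1 * x4 * x6 * x7 * x12 ^ 3 * x13
    - 384 * x1 * x3 * x6 * x8 * x12 ^ 3 * x13
    - 384 * x1 * x3 * x6 * x7 * x12 ^ 4
    + 768 * x1 * x2 * x6 * x11 * x12 * x13 ^ 3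
    + 1536 * x1 * x2 * x6 * x10 * x12 ^ 2 * x13 ^ 2
    + 768 * x1 * x2 * x6 * x9 * x12 ^ 3 * x13
    + 384 * x1 ^ 2 * x6 * x11 * x12 ^ 2 * x13 ^ 2
    + 768 * x1 ^ 2 * x6 * x10 * x12 ^ 3 * x13
    + 384 * x1 ^ 2 * x6 * x9 * x12 ^ 4
    + 384 * x0 * x5 * x8 ^ 2 * x13 ^ 4
    + 768 * x0 * x5 * x7 * x8 * x12 * x13 ^ 3
    + 384 * x0 * x5 * x7 ^ 2 * x12 ^ 2 * x13 ^ 2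
    - 768 * x0 * x5 * x6 * x11 * x13 ^ 4
    - 1536 * x0 * x5 * x6 * x10 * x12 * x13 ^ 3
    - 768 * x0 * x5 * x6 * x9 * x12 ^ 2 * x13 ^ 2
    + 768 * x0 * x4 * x8 ^ 2 * x12 * x13 ^ 3
    + 1536 * x0 * x4 * x7 * x8 * x12 ^ 2 * x13 ^ 2
    + 768 * x0 * x4 * x7 ^ 2 * x12 ^ 3 * x13
    - 1536 * x0 * x4 * x6 * x11 * x12 * x13 ^ 3
    - 3072 * x0 * x4 * x6 * x10 * x12 ^ 2 * x13 ^ 2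
    - 1536 * x0 * x4 * x6 * x9 * x12 ^ 3 * x13
    + 384 * x0 * x3 * x8 ^ 2 * x12 ^ 2 * x13 ^ 2
    + 768 * x0 * x3 * x7 * x8 * x12 ^ 3 * x13
    + 384 * x0 * x3 * x7 ^ 2 * x12 ^ 4
    - 768 * x0 * x3 * x6 * x11 * x12 ^ 2 * x13 ^ 2
    - 1536 * x0 * x3 * x6 * x10 * x12 ^ 3 * x13
    - 768 * x0 * x3 * x6 * x9 * x12 ^ 4
    - 384 * x0 * x2 * x8 * x11 * x13 ^ 4
    - 768 * x0 * x2 * x8 * x10 * x12 * x13 ^ 3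
    - 384 * x0 * x2 * x8 * x9 * x12 ^ 2 * x13 ^ 2
    - 384 * x0 * x2 * x7 * x11 * x12 * x13 ^ 3
    - 768 * x0 * x2 * x7 * x10 * x12 ^ 2 * x13 ^ 2
    - 384 * x0 * x2 * x7 * x9 * x12 ^ 3 * x13
    - 384 * x0 * x1 * x8 * x11 * x12 * x13 ^ 3
    - 768 * x0 * x1 * x8 * x10 * x12 ^ 2 * x13 ^ 2
    - 384 * x0 * x1 * x8 * x9 * x12 ^ 3 * x13
    - 384 * x0 * x1 * x7 * x11 * x12 ^ 2 * x13 ^ 2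
    - 768 * x0 * x1 * x7 * x10 * x12 ^ 3 * x13
    - 384 * x0 * x1 * x7 * x9 * x12 ^ 4
    + 384 * x0 ^ 2 * x11 ^ 2 * x13 ^ 4
    + 1536 * x0 ^ 2 * x10 * x11 * x12 * x13 ^ 3
    + 1536 * x0 ^ 2 * x10 ^ 2 * x12 ^ 2 * x13 ^ 2
    + 768 * x0 ^ 2 * x9 * x11 * x12 ^ 2 * x13 ^ 2
    + 1536 * x0 ^ 2 * x9 * x10 * x12 ^ 3 * x13
    + 384 * x0 ^ 2 * x9 ^ 2 * x12 ^ 4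

set_option maxHeartbeats 1000000 in
lemma d0_1 : pderiv 1 (mu0P) = (0 : R14) := by
  simp only [mu0P, x0, x1, x2, x3, x4, x5, x6, x7, x8, x9, x10, x11, x12, x13, map_add, map_sub, map_neg, pderiv_mul, pderiv_pow, pderiv_C, pderiv_X,
    pderiv_ofNat', Pi.single_apply, Fin.isValue, Fin.reduceEq, reduceIte, pow_one,
    Nat.cast_ofNat, mul_zero, zero_mul, mul_one, one_mul, add_zero, zero_add, sub_zero,
    neg_zero, neg_neg, mul_neg, neg_mul]
  all_goals ring

set_option maxHeartbeats 1000000 in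
lemma d0_2 : pderiv 2 (mu0P) = (0 : R14) := by
  simp only [mu0P, x0, x1, x2, x3, x4, x5, x6, x7, x8, x9, x10, x11, x12, x13, map_add, map_sub, map_neg, pderiv_mul, pderiv_pow, pderiv_C, pderiv_X,
    pderiv_ofNat', Pi.single_apply, Fin.isValue, Fin.reduceEq, reduceIte, pow_one,
    Nat.cast_ofNat, mul_zero, zero_mul, mul_one, one_mul, add_zero, zero_add, sub_zero,
    neg_zero, neg_neg, mul_neg, neg_mul]
  all_goals ring

set_option maxHeartbeats 1000000 in
lemma d0_3 : pderiv 3 (mu0P) = 4 * x5 * x10 ^ 2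
    - 2 * x5 * x9 * x11
    - 4 * x4 * x10 * x11
    + 2 * x3 * x11 ^ 2 := by
  simp only [mu0P, x0, x1, x2, x3, x4, x5, x6, x7, x8, x9, x10, x11, x12, x13, map_add, map_sub, map_neg, pderiv_mul, pderiv_pow, pderiv_C, pderiv_X,
    pderiv_ofNat', Pi.single_apply, Fin.isValue, Fin.reduceEq, reduceIte, pow_one,
    Nat.cast_ofNat, mul_zero, zero_mul, mul_one, one_mul, add_zero, zero_add, sub_zero,
    neg_zero, neg_neg, mul_neg, neg_mul]
  all_goals ring

set_option maxHeartbeats 1000000 in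
lemma d0_4 : pderiv 4 (mu0P) = -(4 * x5 * x9 * x10)
    + 8 * x4 * x9 * x11
    - 4 * x3 * x10 * x11 := by
  simp only [mu0P, x0, x1, x2, x3, x4, x5, x6, x7, x8, x9, x10, x11, x12, x13, map_add, map_sub, map_neg, pderiv_mul, pderiv_pow, pderiv_C, pderiv_X,
    pderiv_ofNat', Pi.single_apply, Fin.isValue, Fin.reduceEq, reduceIte, pow_one,
    Nat.cast_ofNat, mul_zero, zero_mul, mul_one, one_mul, add_zero, zero_add, sub_zero,
    neg_zero, neg_neg, mul_neg, neg_mul]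
  all_goals ring

set_option maxHeartbeats 1000000 in
lemma d0_5 : pderiv 5 (mu0P) = 2 * x5 * x9 ^ 2
    - 4 * x4 * x9 * x10
    + 4 * x3 * x10 ^ 2
    - 2 * x3 * x9 * x11 := by
  simp only [mu0P, x0, x1, x2, x3, x4, x5, x6, x7, x8, x9, x10, x11, x12, x13, map_add, map_sub, map_neg, pderiv_mul, pderiv_pow, pderiv_C, pderiv_X,
    pderiv_ofNat', Pi.single_apply, Fin.isValue, Fin.reduceEq, reduceIte, pow_one,
    Nat.cast_ofNat, mul_zero, zero_mul, mul_one, one_mul, add_zero, zero_add, sub_zero,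
    neg_zero, neg_neg, mul_neg, neg_mul]
  all_goals ring

set_option maxHeartbeats 1000000 in
lemma d0_7 : pderiv 7 (mu0P) = (0 : R14) := by
  simp only [mu0P, x0, x1, x2, x3, x4, x5, x6, x7, x8, x9, x10, x11, x12, x13, map_add, map_sub, map_neg, pderiv_mul, pderiv_pow, pderiv_C, pderiv_X,
    pderiv_ofNat', Pi.single_apply, Fin.isValue, Fin.reduceEq, reduceIte, pow_one,
    Nat.cast_ofNat, mul_zero, zero_mul, mul_one, one_mul, add_zero, zero_add, sub_zero,
    neg_zero, neg_neg, mul_neg, neg_mul]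
  all_goals ring

set_option maxHeartbeats 1000000 in
lemma d0_8 : pderiv 8 (mu0P) = (0 : R14) := by
  simp only [mu0P, x0, x1, x2, x3, x4, x5, x6, x7, x8, x9, x10, x11, x12, x13, map_add, map_sub, map_neg, pderiv_mul, pderiv_pow, pderiv_C, pderiv_X,
    pderiv_ofNat', Pi.single_apply, Fin.isValue, Fin.reduceEq, reduceIte, pow_one,
    Nat.cast_ofNat, mul_zero, zero_mul, mul_one, one_mul, add_zero, zero_add, sub_zero,
    neg_zero, neg_neg, mul_neg, neg_mul]
  all_goals ring

set_option maxHeartbeats 1000000 in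
lemma d0_9 : pderiv 9 (mu0P) = 2 * x5 ^ 2 * x9
    - 4 * x4 * x5 * x10
    + 4 * x4 ^ 2 * x11
    - 2 * x3 * x5 * x11 := by
  simp only [mu0P, x0, x1, x2, x3, x4, x5, x6, x7, x8, x9, x10, x11, x12, x13, map_add, map_sub, map_neg, pderiv_mul, pderiv_pow, pderiv_C, pderiv_X,
    pderiv_ofNat', Pi.single_apply, Fin.isValue, Fin.reduceEq, reduceIte, pow_one,
    Nat.cast_ofNat, mul_zero, zero_mul, mul_one, one_mul, add_zero, zero_add, sub_zero,
    neg_zero, neg_neg, mul_neg, neg_mul]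
  all_goals ring

set_option maxHeartbeats 1000000 in
lemma d0_10 : pderiv 10 (mu0P) = -(4 * x4 * x5 * x9)
    + 8 * x3 * x5 * x10
    - 4 * x3 * x4 * x11 := by
  simp only [mu0P, x0, x1, x2, x3, x4, x5, x6, x7, x8, x9, x10, x11, x12, x13, map_add, map_sub, map_neg, pderiv_mul, pderiv_pow, pderiv_C, pderiv_X,
    pderiv_ofNat', Pi.single_apply, Fin.isValue, Fin.reduceEq, reduceIte, pow_one,
    Nat.cast_ofNat, mul_zero, zero_mul, mul_one, one_mul, add_zero, zero_add, sub_zero,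
    neg_zero, neg_neg, mul_neg, neg_mul]
  all_goals ring

set_option maxHeartbeats 1000000 in
lemma d0_11 : pderiv 11 (mu0P) = 4 * x4 ^ 2 * x9
    - 2 * x3 * x5 * x9
    - 4 * x3 * x4 * x10
    + 2 * x3 ^ 2 * x11 := by
  simp only [mu0P, x0, x1, x2, x3, x4, x5, x6, x7, x8, x9, x10, x11, x12, x13, map_add, map_sub, map_neg, pderiv_mul, pderiv_pow, pderiv_C, pderiv_X,
    pderiv_ofNat', Pi.single_apply, Fin.isValue, Fin.reduceEq, reduceIte, pow_one,
    Nat.cast_ofNat, mul_zero, zero_mul, mul_one, one_mul, add_zero, zero_add, sub_zero,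
    neg_zero, neg_neg, mul_neg, neg_mul]
  all_goals ring

set_option maxHeartbeats 1000000 in
lemma d1_1 : pderiv 1 (G1) = -(8 * x5 * x10 ^ 2 * x13)
    + 4 * x5 * x9 * x11 * x13
    - 4 * x5 * x9 * x10 * x12
    + 8 * x4 * x10 * x11 * x13
    + 8 * x4 * x9 * x11 * x12
    - 4 * x3 * x11 ^ 2 * x13
    - 4 * x3 * x10 * x11 * x12 := by
  simp only [G1, x0, x1, x2, x3, x4, x5, x6, x7, x8, x9, x10, x11, x12, x13, map_add, map_sub, map_neg, pderiv_mul, pderiv_pow, pderiv_C, pderiv_X,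
    pderiv_ofNat', Pi.single_apply, Fin.isValue, Fin.reduceEq, reduceIte, pow_one,
    Nat.cast_ofNat, mul_zero, zero_mul, mul_one, one_mul, add_zero, zero_add, sub_zero,
    neg_zero, neg_neg, mul_neg, neg_mul]
  all_goals ring

set_option maxHeartbeats 1000000 in
lemma d1_2 : pderiv 2 (G1) = 4 * x5 * x9 * x10 * x13
    + 4 * x5 * x9 ^ 2 * x12
    - 8 * x4 * x9 * x11 * x13
    - 8 * x4 * x9 * x10 * x12
    + 4 * x3 * x10 * x11 * x13
    + 8 * x3 * x10 ^ 2 * x12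
    - 4 * x3 * x9 * x11 * x12 := by
  simp only [G1, x0, x1, x2, x3, x4, x5, x6, x7, x8, x9, x10, x11, x12, x13, map_add, map_sub, map_neg, pderiv_mul, pderiv_pow, pderiv_C, pderiv_X,
    pderiv_ofNat', Pi.single_apply, Fin.isValue, Fin.reduceEq, reduceIte, pow_one,
    Nat.cast_ofNat, mul_zero, zero_mul, mul_one, one_mul, add_zero, zero_add, sub_zero,
    neg_zero, neg_neg, mul_neg, neg_mul]
  all_goals ring

set_option maxHeartbeats 1000000 in
lemma d1_3 : pderiv 3 (G1) = -(8 * x5 * x8 * x10 * x13)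
    - 4 * x5 * x8 * x9 * x12
    + 4 * x5 * x7 * x11 * x13
    + 8 * x5 * x7 * x10 * x12
    + 4 * x4 * x8 * x11 * x13
    - 8 * x4 * x8 * x10 * x12
    - 4 * x4 * x7 * x11 * x12
    + 8 * x3 * x8 * x11 * x12
    + 4 * x2 * x10 * x11 * x13
    + 8 * x2 * x10 ^ 2 * x12
    - 4 * x2 * x9 * x11 * x12
    - 4 * x1 * x11 ^ 2 * x13
    - 4 * x1 * x10 * x11 * x12 := by
  simp only [G1, x0, x1, x2, x3, x4, x5, x6, x7, x8, x9, x10, x11, x12, x13, map_add, map_sub, map_neg, pderiv_mul, pderiv_pow, pderiv_C, pderiv_X,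
    pderiv_ofNat', Pi.single_apply, Fin.isValue, Fin.reduceEq, reduceIte, pow_one,
    Nat.cast_ofNat, mul_zero, zero_mul, mul_one, one_mul, add_zero, zero_add, sub_zero,
    neg_zero, neg_neg, mul_neg, neg_mul]
  all_goals ring

set_option maxHeartbeats 1000000 in
lemma d1_4 : pderiv 4 (G1) = 4 * x5 * x8 * x9 * x13
    + 8 * x5 * x7 * x10 * x13
    - 4 * x5 * x7 * x9 * x12
    + 16 * x4 * x8 * x9 * x12
    - 16 * x4 * x7 * x11 * x13
    + 4 * x3 * x8 * x11 * x13
    - 8 * x3 * x8 * x10 * x12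
    - 4 * x3 * x7 * x11 * x12
    - 8 * x2 * x9 * x11 * x13
    - 8 * x2 * x9 * x10 * x12
    + 8 * x1 * x10 * x11 * x13
    + 8 * x1 * x9 * x11 * x12 := by
  simp only [G1, x0, x1, x2, x3, x4, x5, x6, x7, x8, x9, x10, x11, x12, x13, map_add, map_sub, map_neg, pderiv_mul, pderiv_pow, pderiv_C, pderiv_X,
    pderiv_ofNat', Pi.single_apply, Fin.isValue, Fin.reduceEq, reduceIte, pow_one,
    Nat.cast_ofNat, mul_zero, zero_mul, mul_one, one_mul, add_zero, zero_add, sub_zero,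
    neg_zero, neg_neg, mul_neg, neg_mul]
  all_goals ring

set_option maxHeartbeats 1000000 in
lemma d1_5 : pderiv 5 (G1) = -(8 * x5 * x7 * x9 * x13)
    + 4 * x4 * x8 * x9 * x13
    + 8 * x4 * x7 * x10 * x13
    - 4 * x4 * x7 * x9 * x12
    - 8 * x3 * x8 * x10 * x13
    - 4 * x3 * x8 * x9 * x12
    + 4 * x3 * x7 * x11 * x13
    + 8 * x3 * x7 * x10 * x12
    + 4 * x2 * x9 * x10 * x13
    + 4 * x2 * x9 ^ 2 * x12
    - 8 * x1 * x10 ^ 2 * x13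
    + 4 * x1 * x9 * x11 * x13
    - 4 * x1 * x9 * x10 * x12 := by
  simp only [G1, x0, x1, x2, x3, x4, x5, x6, x7, x8, x9, x10, x11, x12, x13, map_add, map_sub, map_neg, pderiv_mul, pderiv_pow, pderiv_C, pderiv_X,
    pderiv_ofNat', Pi.single_apply, Fin.isValue, Fin.reduceEq, reduceIte, pow_one,
    Nat.cast_ofNat, mul_zero, zero_mul, mul_one, one_mul, add_zero, zero_add, sub_zero,
    neg_zero, neg_neg, mul_neg, neg_mul]
  all_goals ring

set_option maxHeartbeats 1000000 in
lemma d1_7 : pderiv 7 (G1) = -(4 * x5 ^ 2 * x9 * x13)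
    + 8 * x4 * x5 * x10 * x13
    - 4 * x4 * x5 * x9 * x12
    - 8 * x4 ^ 2 * x11 * x13
    + 4 * x3 * x5 * x11 * x13
    + 8 * x3 * x5 * x10 * x12
    - 4 * x3 * x4 * x11 * x12 := by
  simp only [G1, x0, x1, x2, x3, x4, x5, x6, x7, x8, x9, x10, x11, x12, x13, map_add, map_sub, map_neg, pderiv_mul, pderiv_pow, pderiv_C, pderiv_X,
    pderiv_ofNat', Pi.single_apply, Fin.isValue, Fin.reduceEq, reduceIte, pow_one,
    Nat.cast_ofNat, mul_zero, zero_mul, mul_one, one_mul, add_zero, zero_add, sub_zero,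
    neg_zero, neg_neg, mul_neg, neg_mul]
  all_goals ring

set_option maxHeartbeats 1000000 in
lemma d1_8 : pderiv 8 (G1) = 4 * x4 * x5 * x9 * x13
    + 8 * x4 ^ 2 * x9 * x12
    - 8 * x3 * x5 * x10 * x13
    - 4 * x3 * x5 * x9 * x12
    + 4 * x3 * x4 * x11 * x13
    - 8 * x3 * x4 * x10 * x12
    + 4 * x3 ^ 2 * x11 * x12 := by
  simp only [G1, x0, x1, x2, x3, x4, x5, x6, x7, x8, x9, x10, x11, x12, x13, map_add, map_sub, map_neg, pderiv_mul, pderiv_pow, pderiv_C, pderiv_X,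
    pderiv_ofNat', Pi.single_apply, Fin.isValue, Fin.reduceEq, reduceIte, pow_one,
    Nat.cast_ofNat, mul_zero, zero_mul, mul_one, one_mul, add_zero, zero_add, sub_zero,
    neg_zero, neg_neg, mul_neg, neg_mul]
  all_goals ring

set_option maxHeartbeats 1000000 in
lemma d1_9 : pderiv 9 (G1) = -(4 * x5 ^ 2 * x7 * x13)
    + 4 * x4 * x5 * x8 * x13
    - 4 * x4 * x5 * x7 * x12
    + 8 * x4 ^ 2 * x8 * x12
    - 4 * x3 * x5 * x8 * x12
    + 4 * x2 * x5 * x10 * x13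
    + 8 * x2 * x5 * x9 * x12
    - 8 * x2 * x4 * x11 * x13
    - 8 * x2 * x4 * x10 * x12
    - 4 * x2 * x3 * x11 * x12
    + 4 * x1 * x5 * x11 * x13
    - 4 * x1 * x5 * x10 * x12
    + 8 * x1 * x4 * x11 * x12 := by
  simp only [G1, x0, x1, x2, x3, x4, x5, x6, x7, x8, x9, x10, x11, x12, x13, map_add, map_sub, map_neg, pderiv_mul, pderiv_pow, pderiv_C, pderiv_X,
    pderiv_ofNat', Pi.single_apply, Fin.isValue, Fin.reduceEq, reduceIte, pow_one,
    Nat.cast_ofNat, mul_zero, zero_mul, mul_one, one_mul, add_zero, zero_add, sub_zero,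
    neg_zero, neg_neg, mul_neg, neg_mul]
  all_goals ring

set_option maxHeartbeats 1000000 in
lemma d1_10 : pderiv 10 (G1) = 8 * x4 * x5 * x7 * x13
    - 8 * x3 * x5 * x8 * x13
    + 8 * x3 * x5 * x7 * x12
    - 8 * x3 * x4 * x8 * x12
    + 4 * x2 * x5 * x9 * x13
    - 8 * x2 * x4 * x9 * x12
    + 4 * x2 * x3 * x11 * x13
    + 16 * x2 * x3 * x10 * x12
    - 16 * x1 * x5 * x10 * x13
    - 4 * x1 * x5 * x9 * x12
    + 8 * x1 * x4 * x11 * x13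
    - 4 * x1 * x3 * x11 * x12 := by
  simp only [G1, x0, x1, x2, x3, x4, x5, x6, x7, x8, x9, x10, x11, x12, x13, map_add, map_sub, map_neg, pderiv_mul, pderiv_pow, pderiv_C, pderiv_X,
    pderiv_ofNat', Pi.single_apply, Fin.isValue, Fin.reduceEq, reduceIte, pow_one,
    Nat.cast_ofNat, mul_zero, zero_mul, mul_one, one_mul, add_zero, zero_add, sub_zero,
    neg_zero, neg_neg, mul_neg, neg_mul]
  all_goals ring

set_option maxHeartbeats 1000000 in
lemma d1_11 : pderiv 11 (G1) = -(8 * x4 ^ 2 * x7 * x13)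
    + 4 * x3 * x5 * x7 * x13
    + 4 * x3 * x4 * x8 * x13
    - 4 * x3 * x4 * x7 * x12
    + 4 * x3 ^ 2 * x8 * x12
    - 8 * x2 * x4 * x9 * x13
    + 4 * x2 * x3 * x10 * x13
    - 4 * x2 * x3 * x9 * x12
    + 4 * x1 * x5 * x9 * x13
    + 8 * x1 * x4 * x10 * x13
    + 8 * x1 * x4 * x9 * x12
    - 8 * x1 * x3 * x11 * x13
    - 4 * x1 * x3 * x10 * x12 := by
  simp only [G1, x0, x1, x2, x3, x4, x5, x6, x7, x8, x9, x10, x11, x12, x13, map_add, map_sub, map_neg, pderiv_mul, pderiv_pow, pderiv_C, pderiv_X,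
    pderiv_ofNat', Pi.single_apply, Fin.isValue, Fin.reduceEq, reduceIte, pow_one,
    Nat.cast_ofNat, mul_zero, zero_mul, mul_one, one_mul, add_zero, zero_add, sub_zero,
    neg_zero, neg_neg, mul_neg, neg_mul]
  all_goals ring

set_option maxHeartbeats 1000000 in
lemma d2_1 : pderiv 1 (G2) = 32 * x5 * x8 * x10 * x13 ^ 2
    + 24 * x5 * x8 * x9 * x12 * x13
    - 16 * x5 * x7 * x11 * x13 ^ 2
    - 16 * x5 * x7 * x10 * x12 * x13
    - 8 * x5 * x7 * x9 * x12 ^ 2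
    - 16 * x4 * x8 * x11 * x13 ^ 2
    + 32 * x4 * x8 * x10 * x12 * x13
    + 32 * x4 * x8 * x9 * x12 ^ 2
    - 16 * x4 * x7 * x11 * x12 * x13
    - 24 * x3 * x8 * x11 * x12 * x13
    - 16 * x3 * x8 * x10 * x12 ^ 2
    - 8 * x3 * x7 * x11 * x12 ^ 2
    - 16 * x2 * x10 * x11 * x13 ^ 2
    - 32 * x2 * x10 ^ 2 * x12 * x13
    - 16 * x2 * x9 * x10 * x12 ^ 2
    + 16 * x1 * x11 ^ 2 * x13 ^ 2
    + 32 * x1 * x10 * x11 * x12 * x13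
    + 16 * x1 * x9 * x11 * x12 ^ 2 := by
  simp only [G2, x0, x1, x2, x3, x4, x5, x6, x7, x8, x9, x10, x11, x12, x13, map_add, map_sub, map_neg, pderiv_mul, pderiv_pow, pderiv_C, pderiv_X,
    pderiv_ofNat', Pi.single_apply, Fin.isValue, Fin.reduceEq, reduceIte, pow_one,
    Nat.cast_ofNat, mul_zero, zero_mul, mul_one, one_mul, add_zero, zero_add, sub_zero,
    neg_zero, neg_neg, mul_neg, neg_mul]
  all_goals ring

set_option maxHeartbeats 1000000 in
lemma d2_2 : pderiv 2 (G2) = -(8 * x5 * x8 * x9 * x13 ^ 2)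
    - 16 * x5 * x7 * x10 * x13 ^ 2
    - 24 * x5 * x7 * x9 * x12 * x13
    - 16 * x4 * x8 * x9 * x12 * x13
    + 32 * x4 * x7 * x11 * x13 ^ 2
    + 32 * x4 * x7 * x10 * x12 * x13
    - 16 * x4 * x7 * x9 * x12 ^ 2
    - 8 * x3 * x8 * x11 * x13 ^ 2
    - 16 * x3 * x8 * x10 * x12 * x13
    - 16 * x3 * x8 * x9 * x12 ^ 2
    + 24 * x3 * x7 * x11 * x12 * x13
    + 32 * x3 * x7 * x10 * x12 ^ 2
    + 16 * x2 * x9 * x11 * x13 ^ 2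
    + 32 * x2 * x9 * x10 * x12 * x13
    + 16 * x2 * x9 ^ 2 * x12 ^ 2
    - 16 * x1 * x10 * x11 * x13 ^ 2
    - 32 * x1 * x10 ^ 2 * x12 * x13
    - 16 * x1 * x9 * x10 * x12 ^ 2 := by
  simp only [G2, x0, x1, x2, x3, x4, x5, x6, x7, x8, x9, x10, x11, x12, x13, map_add, map_sub, map_neg, pderiv_mul, pderiv_pow, pderiv_C, pderiv_X,
    pderiv_ofNat', Pi.single_apply, Fin.isValue, Fin.reduceEq, reduceIte, pow_one,
    Nat.cast_ofNat, mul_zero, zero_mul, mul_one, one_mul, add_zero, zero_add, sub_zero,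
    neg_zero, neg_neg, mul_neg, neg_mul]
  all_goals ring

set_option maxHeartbeats 1000000 in
lemma d2_3 : pderiv 3 (G2) = 8 * x5 * x8 ^ 2 * x13 ^ 2
    + 8 * x5 * x7 ^ 2 * x12 ^ 2
    - 16 * x5 * x6 * x11 * x13 ^ 2
    - 64 * x5 * x6 * x10 * x12 * x13
    - 16 * x5 * x6 * x9 * x12 ^ 2
    + 16 * x4 * x8 ^ 2 * x12 * x13
    - 16 * x4 * x7 * x8 * x12 ^ 2
    + 32 * x4 * x6 * x11 * x12 * x13
    - 32 * x4 * x6 * x10 * x12 ^ 2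
    + 16 * x3 * x8 ^ 2 * x12 ^ 2
    + 32 * x3 * x6 * x11 * x12 ^ 2
    - 8 * x2 * x8 * x11 * x13 ^ 2
    - 16 * x2 * x8 * x10 * x12 * x13
    - 16 * x2 * x8 * x9 * x12 ^ 2
    + 24 * x2 * x7 * x11 * x12 * x13
    + 32 * x2 * x7 * x10 * x12 ^ 2
    - 24 * x1 * x8 * x11 * x12 * x13
    - 16 * x1 * x8 * x10 * x12 ^ 2
    - 8 * x1 * x7 * x11 * x12 ^ 2
    + 16 * x0 * x11 ^ 2 * x13 ^ 2
    + 32 * x0 * x10 * x11 * x12 * x13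
    + 32 * x0 * x10 ^ 2 * x12 ^ 2
    - 16 * x0 * x9 * x11 * x12 ^ 2 := by
  simp only [G2, x0, x1, x2, x3, x4, x5, x6, x7, x8, x9, x10, x11, x12, x13, map_add, map_sub, map_neg, pderiv_mul, pderiv_pow, pderiv_C, pderiv_X,
    pderiv_ofNat', Pi.single_apply, Fin.isValue, Fin.reduceEq, reduceIte, pow_one,
    Nat.cast_ofNat, mul_zero, zero_mul, mul_one, one_mul, add_zero, zero_add, sub_zero,
    neg_zero, neg_neg, mul_neg, neg_mul]
  all_goals ring

set_option maxHeartbeats 1000000 in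
lemma d2_4 : pderiv 4 (G2) = -(16 * x5 * x7 * x8 * x13 ^ 2)
    + 16 * x5 * x7 ^ 2 * x12 * x13
    - 32 * x5 * x6 * x10 * x13 ^ 2
    + 32 * x5 * x6 * x9 * x12 * x13
    - 64 * x4 * x7 * x8 * x12 * x13
    + 64 * x4 * x6 * x11 * x13 ^ 2
    + 64 * x4 * x6 * x9 * x12 ^ 2
    + 16 * x3 * x8 ^ 2 * x12 * x13
    - 16 * x3 * x7 * x8 * x12 ^ 2
    + 32 * x3 * x6 * x11 * x12 * x13
    - 32 * x3 * x6 * x10 * x12 ^ 2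
    - 16 * x2 * x8 * x9 * x12 * x13
    + 32 * x2 * x7 * x11 * x13 ^ 2
    + 32 * x2 * x7 * x10 * x12 * x13
    - 16 * x2 * x7 * x9 * x12 ^ 2
    - 16 * x1 * x8 * x11 * x13 ^ 2
    + 32 * x1 * x8 * x10 * x12 * x13
    + 32 * x1 * x8 * x9 * x12 ^ 2
    - 16 * x1 * x7 * x11 * x12 * x13
    - 32 * x0 * x10 * x11 * x13 ^ 2
    - 64 * x0 * x9 * x11 * x12 * x13
    - 32 * x0 * x9 * x10 * x12 ^ 2 := by
  simp only [G2, x0, x1, x2, x3, x4, x5, x6, x7, x8, x9, x10, x11, x12, x13, map_add, map_sub, map_neg, pderiv_mul, pderiv_pow, pderiv_C, pderiv_X,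
    pderiv_ofNat', Pi.single_apply, Fin.isValue, Fin.reduceEq, reduceIte, pow_one,
    Nat.cast_ofNat, mul_zero, zero_mul, mul_one, one_mul, add_zero, zero_add, sub_zero,
    neg_zero, neg_neg, mul_neg, neg_mul]
  all_goals ring

set_option maxHeartbeats 1000000 in
lemma d2_5 : pderiv 5 (G2) = 16 * x5 * x7 ^ 2 * x13 ^ 2
    + 32 * x5 * x6 * x9 * x13 ^ 2
    - 16 * x4 * x7 * x8 * x13 ^ 2
    + 16 * x4 * x7 ^ 2 * x12 * x13
    - 32 * x4 * x6 * x10 * x13 ^ 2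
    + 32 * x4 * x6 * x9 * x12 * x13
    + 8 * x3 * x8 ^ 2 * x13 ^ 2
    + 8 * x3 * x7 ^ 2 * x12 ^ 2
    - 16 * x3 * x6 * x11 * x13 ^ 2
    - 64 * x3 * x6 * x10 * x12 * x13
    - 16 * x3 * x6 * x9 * x12 ^ 2
    - 8 * x2 * x8 * x9 * x13 ^ 2
    - 16 * x2 * x7 * x10 * x13 ^ 2
    - 24 * x2 * x7 * x9 * x12 * x13
    + 32 * x1 * x8 * x10 * x13 ^ 2
    + 24 * x1 * x8 * x9 * x12 * x13
    - 16 * x1 * x7 * x11 * x13 ^ 2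
    - 16 * x1 * x7 * x10 * x12 * x13
    - 8 * x1 * x7 * x9 * x12 ^ 2
    + 32 * x0 * x10 ^ 2 * x13 ^ 2
    - 16 * x0 * x9 * x11 * x13 ^ 2
    + 32 * x0 * x9 * x10 * x12 * x13
    + 16 * x0 * x9 ^ 2 * x12 ^ 2 := by
  simp only [G2, x0, x1, x2, x3, x4, x5, x6, x7, x8, x9, x10, x11, x12, x13, map_add, map_sub, map_neg, pderiv_mul, pderiv_pow, pderiv_C, pderiv_X,
    pderiv_ofNat', Pi.single_apply, Fin.isValue, Fin.reduceEq, reduceIte, pow_one,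
    Nat.cast_ofNat, mul_zero, zero_mul, mul_one, one_mul, add_zero, zero_add, sub_zero,
    neg_zero, neg_neg, mul_neg, neg_mul]
  all_goals ring

set_option maxHeartbeats 1000000 in
lemma d2_7 : pderiv 7 (G2) = 16 * x5 ^ 2 * x7 * x13 ^ 2
    - 16 * x4 * x5 * x8 * x13 ^ 2
    + 32 * x4 * x5 * x7 * x12 * x13
    - 32 * x4 ^ 2 * x8 * x12 * x13
    + 16 * x3 * x5 * x7 * x12 ^ 2
    - 16 * x3 * x4 * x8 * x12 ^ 2
    - 16 * x2 * x5 * x10 * x13 ^ 2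
    - 24 * x2 * x5 * x9 * x12 * x13
    + 32 * x2 * x4 * x11 * x13 ^ 2
    + 32 * x2 * x4 * x10 * x12 * x13
    - 16 * x2 * x4 * x9 * x12 ^ 2
    + 24 * x2 * x3 * x11 * x12 * x13
    + 32 * x2 * x3 * x10 * x12 ^ 2
    - 16 * x1 * x5 * x11 * x13 ^ 2
    - 16 * x1 * x5 * x10 * x12 * x13
    - 8 * x1 * x5 * x9 * x12 ^ 2
    - 16 * x1 * x4 * x11 * x12 * x13
    - 8 * x1 * x3 * x11 * x12 ^ 2 := by
  simp only [G2, x0, x1, x2, x3, x4, x5, x6, x7, x8, x9, x10, x11, x12, x13, map_add, map_sub, map_neg, pderiv_mul, pderiv_pow, pderiv_C, pderiv_X,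
    pderiv_ofNat', Pi.single_apply, Fin.isValue, Fin.reduceEq, reduceIte, pow_one,
    Nat.cast_ofNat, mul_zero, zero_mul, mul_one, one_mul, add_zero, zero_add, sub_zero,
    neg_zero, neg_neg, mul_neg, neg_mul]
  all_goals ring

set_option maxHeartbeats 1000000 in
lemma d2_8 : pderiv 8 (G2) = -(16 * x4 * x5 * x7 * x13 ^ 2)
    - 32 * x4 ^ 2 * x7 * x12 * x13
    + 16 * x3 * x5 * x8 * x13 ^ 2
    + 32 * x3 * x4 * x8 * x12 * x13
    - 16 * x3 * x4 * x7 * x12 ^ 2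
    + 16 * x3 ^ 2 * x8 * x12 ^ 2
    - 8 * x2 * x5 * x9 * x13 ^ 2
    - 16 * x2 * x4 * x9 * x12 * x13
    - 8 * x2 * x3 * x11 * x13 ^ 2
    - 16 * x2 * x3 * x10 * x12 * x13
    - 16 * x2 * x3 * x9 * x12 ^ 2
    + 32 * x1 * x5 * x10 * x13 ^ 2
    + 24 * x1 * x5 * x9 * x12 * x13
    - 16 * x1 * x4 * x11 * x13 ^ 2
    + 32 * x1 * x4 * x10 * x12 * x13
    + 32 * x1 * x4 * x9 * x12 ^ 2
    - 24 * x1 * x3 * x11 * x12 * x13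
    - 16 * x1 * x3 * x10 * x12 ^ 2 := by
  simp only [G2, x0, x1, x2, x3, x4, x5, x6, x7, x8, x9, x10, x11, x12, x13, map_add, map_sub, map_neg, pderiv_mul, pderiv_pow, pderiv_C, pderiv_X,
    pderiv_ofNat', Pi.single_apply, Fin.isValue, Fin.reduceEq, reduceIte, pow_one,
    Nat.cast_ofNat, mul_zero, zero_mul, mul_one, one_mul, add_zero, zero_add, sub_zero,
    neg_zero, neg_neg, mul_neg, neg_mul]
  all_goals ring

set_option maxHeartbeats 1000000 in
lemma d2_9 : pderiv 9 (G2) = 16 * x5 ^ 2 * x6 * x13 ^ 2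
    + 32 * x4 * x5 * x6 * x12 * x13
    + 32 * x4 ^ 2 * x6 * x12 ^ 2
    - 16 * x3 * x5 * x6 * x12 ^ 2
    - 8 * x2 * x5 * x8 * x13 ^ 2
    - 24 * x2 * x5 * x7 * x12 * x13
    - 16 * x2 * x4 * x8 * x12 * x13
    - 16 * x2 * x4 * x7 * x12 ^ 2
    - 16 * x2 * x3 * x8 * x12 ^ 2
    + 8 * x2 ^ 2 * x11 * x13 ^ 2
    + 16 * x2 ^ 2 * x10 * x12 * x13
    + 16 * x2 ^ 2 * x9 * x12 ^ 2
    + 24 * x1 * x5 * x8 * x12 * x13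
    - 8 * x1 * x5 * x7 * x12 ^ 2
    + 32 * x1 * x4 * x8 * x12 ^ 2
    - 16 * x1 * x2 * x10 * x12 ^ 2
    + 8 * x1 ^ 2 * x11 * x12 ^ 2
    - 16 * x0 * x5 * x11 * x13 ^ 2
    + 32 * x0 * x5 * x10 * x12 * x13
    + 32 * x0 * x5 * x9 * x12 ^ 2
    - 64 * x0 * x4 * x11 * x12 * x13
    - 32 * x0 * x4 * x10 * x12 ^ 2
    - 16 * x0 * x3 * x11 * x12 ^ 2 := by
  simp only [G2, x0, x1, x2, x3, x4, x5, x6, x7, x8, x9, x10, x11, x12, x13, map_add, map_sub, map_neg, pderiv_mul, pderiv_pow, pderiv_C, pderiv_X,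
    pderiv_ofNat', Pi.single_apply, Fin.isValue, Fin.reduceEq, reduceIte, pow_one,
    Nat.cast_ofNat, mul_zero, zero_mul, mul_one, one_mul, add_zero, zero_add, sub_zero,
    neg_zero, neg_neg, mul_neg, neg_mul]
  all_goals ring

set_option maxHeartbeats 1000000 in
lemma d2_10 : pderiv 10 (G2) = -(32 * x4 * x5 * x6 * x13 ^ 2)
    - 64 * x3 * x5 * x6 * x12 * x13
    - 32 * x3 * x4 * x6 * x12 ^ 2
    - 16 * x2 * x5 * x7 * x13 ^ 2
    + 32 * x2 * x4 * x7 * x12 * x13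
    - 16 * x2 * x3 * x8 * x12 * x13
    + 32 * x2 * x3 * x7 * x12 ^ 2
    + 16 * x2 ^ 2 * x9 * x12 * x13
    + 32 * x1 * x5 * x8 * x13 ^ 2
    - 16 * x1 * x5 * x7 * x12 * x13
    + 32 * x1 * x4 * x8 * x12 * x13
    - 16 * x1 * x3 * x8 * x12 ^ 2
    - 16 * x1 * x2 * x11 * x13 ^ 2
    - 64 * x1 * x2 * x10 * x12 * x13
    - 16 * x1 * x2 * x9 * x12 ^ 2
    + 16 * x1 ^ 2 * x11 * x12 * x13
    + 64 * x0 * x5 * x10 * x13 ^ 2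
    + 32 * x0 * x5 * x9 * x12 * x13
    - 32 * x0 * x4 * x11 * x13 ^ 2
    - 32 * x0 * x4 * x9 * x12 ^ 2
    + 32 * x0 * x3 * x11 * x12 * x13
    + 64 * x0 * x3 * x10 * x12 ^ 2 := by
  simp only [G2, x0, x1, x2, x3, x4, x5, x6, x7, x8, x9, x10, x11, x12, x13, map_add, map_sub, map_neg, pderiv_mul, pderiv_pow, pderiv_C, pderiv_X,
    pderiv_ofNat', Pi.single_apply, Fin.isValue, Fin.reduceEq, reduceIte, pow_one,
    Nat.cast_ofNat, mul_zero, zero_mul, mul_one, one_mul, add_zero, zero_add, sub_zero,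
    neg_zero, neg_neg, mul_neg, neg_mul]
  all_goals ring

set_option maxHeartbeats 1000000 in
lemma d2_11 : pderiv 11 (G2) = 32 * x4 ^ 2 * x6 * x13 ^ 2
    - 16 * x3 * x5 * x6 * x13 ^ 2
    + 32 * x3 * x4 * x6 * x12 * x13
    + 16 * x3 ^ 2 * x6 * x12 ^ 2
    + 32 * x2 * x4 * x7 * x13 ^ 2
    - 8 * x2 * x3 * x8 * x13 ^ 2
    + 24 * x2 * x3 * x7 * x12 * x13
    + 8 * x2 ^ 2 * x9 * x13 ^ 2
    - 16 * x1 * x5 * x7 * x13 ^ 2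
    - 16 * x1 * x4 * x8 * x13 ^ 2
    - 16 * x1 * x4 * x7 * x12 * x13
    - 24 * x1 * x3 * x8 * x12 * x13
    - 8 * x1 * x3 * x7 * x12 ^ 2
    - 16 * x1 * x2 * x10 * x13 ^ 2
    + 16 * x1 ^ 2 * x11 * x13 ^ 2
    + 16 * x1 ^ 2 * x10 * x12 * x13
    + 8 * x1 ^ 2 * x9 * x12 ^ 2
    - 16 * x0 * x5 * x9 * x13 ^ 2
    - 32 * x0 * x4 * x10 * x13 ^ 2
    - 64 * x0 * x4 * x9 * x12 * x13
    + 32 * x0 * x3 * x11 * x13 ^ 2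
    + 32 * x0 * x3 * x10 * x12 * x13
    - 16 * x0 * x3 * x9 * x12 ^ 2 := by
  simp only [G2, x0, x1, x2, x3, x4, x5, x6, x7, x8, x9, x10, x11, x12, x13, map_add, map_sub, map_neg, pderiv_mul, pderiv_pow, pderiv_C, pderiv_X,
    pderiv_ofNat', Pi.single_apply, Fin.isValue, Fin.reduceEq, reduceIte, pow_one,
    Nat.cast_ofNat, mul_zero, zero_mul, mul_one, one_mul, add_zero, zero_add, sub_zero,
    neg_zero, neg_neg, mul_neg, neg_mul]
  all_goals ring

set_option maxHeartbeats 1000000 in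
lemma d3_1 : pderiv 1 (G3) = -(48 * x5 * x8 ^ 2 * x13 ^ 3)
    - 48 * x5 * x7 * x8 * x12 * x13 ^ 2
    + 96 * x5 * x6 * x11 * x13 ^ 3
    + 288 * x5 * x6 * x10 * x12 * x13 ^ 2
    + 192 * x5 * x6 * x9 * x12 ^ 2 * x13
    - 96 * x4 * x8 ^ 2 * x12 * x13 ^ 2
    - 96 * x4 * x7 * x8 * x12 ^ 2 * x13
    + 192 * x4 * x6 * x10 * x12 ^ 2 * x13
    + 192 * x4 * x6 * x9 * x12 ^ 3
    - 48 * x3 * x8 ^ 2 * x12 ^ 2 * x13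
    - 48 * x3 * x7 * x8 * x12 ^ 3
    - 96 * x3 * x6 * x11 * x12 ^ 2 * x13
    - 96 * x3 * x6 * x10 * x12 ^ 3
    + 48 * x2 * x8 * x11 * x13 ^ 3
    + 96 * x2 * x8 * x10 * x12 * x13 ^ 2
    + 48 * x2 * x8 * x9 * x12 ^ 2 * x13
    - 48 * x2 * x7 * x11 * x12 * x13 ^ 2
    - 96 * x2 * x7 * x10 * x12 ^ 2 * x13
    - 48 * x2 * x7 * x9 * x12 ^ 3
    + 96 * x1 * x8 * x11 * x12 * x13 ^ 2
    + 192 * x1 * x8 * x10 * x12 ^ 2 * x13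
    + 96 * x1 * x8 * x9 * x12 ^ 3
    - 96 * x0 * x11 ^ 2 * x13 ^ 3
    - 288 * x0 * x10 * x11 * x12 * x13 ^ 2
    - 192 * x0 * x10 ^ 2 * x12 ^ 2 * x13
    - 96 * x0 * x9 * x11 * x12 ^ 2 * x13
    - 96 * x0 * x9 * x10 * x12 ^ 3 := by
  simp only [G3, x0, x1, x2, x3, x4, x5, x6, x7, x8, x9, x10, x11, x12, x13, map_add, map_sub, map_neg, pderiv_mul, pderiv_pow, pderiv_C, pderiv_X,
    pderiv_ofNat', Pi.single_apply, Fin.isValue, Fin.reduceEq, reduceIte, pow_one,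
    Nat.cast_ofNat, mul_zero, zero_mul, mul_one, one_mul, add_zero, zero_add, sub_zero,
    neg_zero, neg_neg, mul_neg, neg_mul]
  all_goals ring

set_option maxHeartbeats 1000000 in
lemma d3_2 : pderiv 2 (G3) = 48 * x5 * x7 * x8 * x13 ^ 3
    + 48 * x5 * x7 ^ 2 * x12 * x13 ^ 2
    + 96 * x5 * x6 * x10 * x13 ^ 3
    + 96 * x5 * x6 * x9 * x12 * x13 ^ 2
    + 96 * x4 * x7 * x8 * x12 * x13 ^ 2
    + 96 * x4 * x7 ^ 2 * x12 ^ 2 * x13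
    - 192 * x4 * x6 * x11 * x13 ^ 3
    - 192 * x4 * x6 * x10 * x12 * x13 ^ 2
    + 48 * x3 * x7 * x8 * x12 ^ 2 * x13
    + 48 * x3 * x7 ^ 2 * x12 ^ 3
    - 192 * x3 * x6 * x11 * x12 * x13 ^ 2
    - 288 * x3 * x6 * x10 * x12 ^ 2 * x13
    - 96 * x3 * x6 * x9 * x12 ^ 3
    - 96 * x2 * x7 * x11 * x13 ^ 3
    - 192 * x2 * x7 * x10 * x12 * x13 ^ 2
    - 96 * x2 * x7 * x9 * x12 ^ 2 * x13
    + 48 * x1 * x8 * x11 * x13 ^ 3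
    + 96 * x1 * x8 * x10 * x12 * x13 ^ 2
    + 48 * x1 * x8 * x9 * x12 ^ 2 * x13
    - 48 * x1 * x7 * x11 * x12 * x13 ^ 2
    - 96 * x1 * x7 * x10 * x12 ^ 2 * x13
    - 48 * x1 * x7 * x9 * x12 ^ 3
    + 96 * x0 * x10 * x11 * x13 ^ 3
    + 192 * x0 * x10 ^ 2 * x12 * x13 ^ 2
    + 96 * x0 * x9 * x11 * x12 * x13 ^ 2
    + 288 * x0 * x9 * x10 * x12 ^ 2 * x13
    + 96 * x0 * x9 ^ 2 * x12 ^ 3 := by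
  simp only [G3, x0, x1, x2, x3, x4, x5, x6, x7, x8, x9, x10, x11, x12, x13, map_add, map_sub, map_neg, pderiv_mul, pderiv_pow, pderiv_C, pderiv_X,
    pderiv_ofNat', Pi.single_apply, Fin.isValue, Fin.reduceEq, reduceIte, pow_one,
    Nat.cast_ofNat, mul_zero, zero_mul, mul_one, one_mul, add_zero, zero_add, sub_zero,
    neg_zero, neg_neg, mul_neg, neg_mul]
  all_goals ring

set_option maxHeartbeats 1000000 in
lemma d3_3 : pderiv 3 (G3) = 96 * x5 * x6 * x8 * x12 * x13 ^ 2
    - 96 * x5 * x6 * x7 * x12 ^ 2 * x13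
    + 288 * x4 * x6 * x8 * x12 ^ 2 * x13
    - 96 * x4 * x6 * x7 * x12 ^ 3
    + 192 * x3 * x6 * x8 * x12 ^ 3
    + 48 * x2 * x7 * x8 * x12 ^ 2 * x13
    + 48 * x2 * x7 ^ 2 * x12 ^ 3
    - 192 * x2 * x6 * x11 * x12 * x13 ^ 2
    - 288 * x2 * x6 * x10 * x12 ^ 2 * x13
    - 96 * x2 * x6 * x9 * x12 ^ 3
    - 48 * x1 * x8 ^ 2 * x12 ^ 2 * x13
    - 48 * x1 * x7 * x8 * x12 ^ 3
    - 96 * x1 * x6 * x11 * x12 ^ 2 * x13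
    - 96 * x1 * x6 * x10 * x12 ^ 3
    + 96 * x0 * x8 * x11 * x12 * x13 ^ 2
    - 96 * x0 * x8 * x9 * x12 ^ 3
    + 192 * x0 * x7 * x11 * x12 ^ 2 * x13
    + 192 * x0 * x7 * x10 * x12 ^ 3 := by
  simp only [G3, x0, x1, x2, x3, x4, x5, x6, x7, x8, x9, x10, x11, x12, x13, map_add, map_sub, map_neg, pderiv_mul, pderiv_pow, pderiv_C, pderiv_X,
    pderiv_ofNat', Pi.single_apply, Fin.isValue, Fin.reduceEq, reduceIte, pow_one,
    Nat.cast_ofNat, mul_zero, zero_mul, mul_one, one_mul, add_zero, zero_add, sub_zero,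
    neg_zero, neg_neg, mul_neg, neg_mul]
  all_goals ring

set_option maxHeartbeats 1000000 in
lemma d3_4 : pderiv 4 (G3) = 96 * x5 * x6 * x8 * x13 ^ 3
    - 288 * x5 * x6 * x7 * x12 * x13 ^ 2
    + 384 * x4 * x6 * x8 * x12 * x13 ^ 2
    - 384 * x4 * x6 * x7 * x12 ^ 2 * x13
    + 288 * x3 * x6 * x8 * x12 ^ 2 * x13
    - 96 * x3 * x6 * x7 * x12 ^ 3
    + 96 * x2 * x7 * x8 * x12 * x13 ^ 2
    + 96 * x2 * x7 ^ 2 * x12 ^ 2 * x13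
    - 192 * x2 * x6 * x11 * x13 ^ 3
    - 192 * x2 * x6 * x10 * x12 * x13 ^ 2
    - 96 * x1 * x8 ^ 2 * x12 * x13 ^ 2
    - 96 * x1 * x7 * x8 * x12 ^ 2 * x13
    + 192 * x1 * x6 * x10 * x12 ^ 2 * x13
    + 192 * x1 * x6 * x9 * x12 ^ 3
    + 96 * x0 * x8 * x11 * x13 ^ 3
    - 192 * x0 * x8 * x10 * x12 * x13 ^ 2
    - 288 * x0 * x8 * x9 * x12 ^ 2 * x13
    + 288 * x0 * x7 * x11 * x12 * x13 ^ 2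
    + 192 * x0 * x7 * x10 * x12 ^ 2 * x13
    - 96 * x0 * x7 * x9 * x12 ^ 3 := by
  simp only [G3, x0, x1, x2, x3, x4, x5, x6, x7, x8, x9, x10, x11, x12, x13, map_add, map_sub, map_neg, pderiv_mul, pderiv_pow, pderiv_C, pderiv_X,
    pderiv_ofNat', Pi.single_apply, Fin.isValue, Fin.reduceEq, reduceIte, pow_one,
    Nat.cast_ofNat, mul_zero, zero_mul, mul_one, one_mul, add_zero, zero_add, sub_zero,
    neg_zero, neg_neg, mul_neg, neg_mul]
  all_goals ring

set_option maxHeartbeats 1000000 in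
lemma d3_5 : pderiv 5 (G3) = -(192 * x5 * x6 * x7 * x13 ^ 3)
    + 96 * x4 * x6 * x8 * x13 ^ 3
    - 288 * x4 * x6 * x7 * x12 * x13 ^ 2
    + 96 * x3 * x6 * x8 * x12 * x13 ^ 2
    - 96 * x3 * x6 * x7 * x12 ^ 2 * x13
    + 48 * x2 * x7 * x8 * x13 ^ 3
    + 48 * x2 * x7 ^ 2 * x12 * x13 ^ 2
    + 96 * x2 * x6 * x10 * x13 ^ 3
    + 96 * x2 * x6 * x9 * x12 * x13 ^ 2
    - 48 * x1 * x8 ^ 2 * x13 ^ 3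
    - 48 * x1 * x7 * x8 * x12 * x13 ^ 2
    + 96 * x1 * x6 * x11 * x13 ^ 3
    + 288 * x1 * x6 * x10 * x12 * x13 ^ 2
    + 192 * x1 * x6 * x9 * x12 ^ 2 * x13
    - 192 * x0 * x8 * x10 * x13 ^ 3
    - 192 * x0 * x8 * x9 * x12 * x13 ^ 2
    + 96 * x0 * x7 * x11 * x13 ^ 3
    - 96 * x0 * x7 * x9 * x12 ^ 2 * x13 := by
  simp only [G3, x0, x1, x2, x3, x4, x5, x6, x7, x8, x9, x10, x11, x12, x13, map_add, map_sub, map_neg, pderiv_mul, pderiv_pow, pderiv_C, pderiv_X,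
    pderiv_ofNat', Pi.single_apply, Fin.isValue, Fin.reduceEq, reduceIte, pow_one,
    Nat.cast_ofNat, mul_zero, zero_mul, mul_one, one_mul, add_zero, zero_add, sub_zero,
    neg_zero, neg_neg, mul_neg, neg_mul]
  all_goals ring

set_option maxHeartbeats 1000000 in
lemma d3_7 : pderiv 7 (G3) = -(96 * x5 ^ 2 * x6 * x13 ^ 3)
    - 288 * x4 * x5 * x6 * x12 * x13 ^ 2
    - 192 * x4 ^ 2 * x6 * x12 ^ 2 * x13
    - 96 * x3 * x5 * x6 * x12 ^ 2 * x13
    - 96 * x3 * x4 * x6 * x12 ^ 3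
    + 48 * x2 * x5 * x8 * x13 ^ 3
    + 96 * x2 * x5 * x7 * x12 * x13 ^ 2
    + 96 * x2 * x4 * x8 * x12 * x13 ^ 2
    + 192 * x2 * x4 * x7 * x12 ^ 2 * x13
    + 48 * x2 * x3 * x8 * x12 ^ 2 * x13
    + 96 * x2 * x3 * x7 * x12 ^ 3
    - 48 * x2 ^ 2 * x11 * x13 ^ 3
    - 96 * x2 ^ 2 * x10 * x12 * x13 ^ 2
    - 48 * x2 ^ 2 * x9 * x12 ^ 2 * x13
    - 48 * x1 * x5 * x8 * x12 * x13 ^ 2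
    - 96 * x1 * x4 * x8 * x12 ^ 2 * x13
    - 48 * x1 * x3 * x8 * x12 ^ 3
    - 48 * x1 * x2 * x11 * x12 * x13 ^ 2
    - 96 * x1 * x2 * x10 * x12 ^ 2 * x13
    - 48 * x1 * x2 * x9 * x12 ^ 3
    + 96 * x0 * x5 * x11 * x13 ^ 3
    - 96 * x0 * x5 * x9 * x12 ^ 2 * x13
    + 288 * x0 * x4 * x11 * x12 * x13 ^ 2
    + 192 * x0 * x4 * x10 * x12 ^ 2 * x13
    - 96 * x0 * x4 * x9 * x12 ^ 3
    + 192 * x0 * x3 * x11 * x12 ^ 2 * x13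
    + 192 * x0 * x3 * x10 * x12 ^ 3 := by
  simp only [G3, x0, x1, x2, x3, x4, x5, x6, x7, x8, x9, x10, x11, x12, x13, map_add, map_sub, map_neg, pderiv_mul, pderiv_pow, pderiv_C, pderiv_X,
    pderiv_ofNat', Pi.single_apply, Fin.isValue, Fin.reduceEq, reduceIte, pow_one,
    Nat.cast_ofNat, mul_zero, zero_mul, mul_one, one_mul, add_zero, zero_add, sub_zero,
    neg_zero, neg_neg, mul_neg, neg_mul]
  all_goals ring

set_option maxHeartbeats 1000000 in
lemma d3_8 : pderiv 8 (G3) = 96 * x4 * x5 * x6 * x13 ^ 3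
    + 192 * x4 ^ 2 * x6 * x12 * x13 ^ 2
    + 96 * x3 * x5 * x6 * x12 * x13 ^ 2
    + 288 * x3 * x4 * x6 * x12 ^ 2 * x13
    + 96 * x3 ^ 2 * x6 * x12 ^ 3
    + 48 * x2 * x5 * x7 * x13 ^ 3
    + 96 * x2 * x4 * x7 * x12 * x13 ^ 2
    + 48 * x2 * x3 * x7 * x12 ^ 2 * x13
    - 96 * x1 * x5 * x8 * x13 ^ 3
    - 48 * x1 * x5 * x7 * x12 * x13 ^ 2
    - 192 * x1 * x4 * x8 * x12 * x13 ^ 2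
    - 96 * x1 * x4 * x7 * x12 ^ 2 * x13
    - 96 * x1 * x3 * x8 * x12 ^ 2 * x13
    - 48 * x1 * x3 * x7 * x12 ^ 3
    + 48 * x1 * x2 * x11 * x13 ^ 3
    + 96 * x1 * x2 * x10 * x12 * x13 ^ 2
    + 48 * x1 * x2 * x9 * x12 ^ 2 * x13
    + 48 * x1 ^ 2 * x11 * x12 * x13 ^ 2
    + 96 * x1 ^ 2 * x10 * x12 ^ 2 * x13
    + 48 * x1 ^ 2 * x9 * x12 ^ 3
    - 192 * x0 * x5 * x10 * x13 ^ 3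
    - 192 * x0 * x5 * x9 * x12 * x13 ^ 2
    + 96 * x0 * x4 * x11 * x13 ^ 3
    - 192 * x0 * x4 * x10 * x12 * x13 ^ 2
    - 288 * x0 * x4 * x9 * x12 ^ 2 * x13
    + 96 * x0 * x3 * x11 * x12 * x13 ^ 2
    - 96 * x0 * x3 * x9 * x12 ^ 3 := by
  simp only [G3, x0, x1, x2, x3, x4, x5, x6, x7, x8, x9, x10, x11, x12, x13, map_add, map_sub, map_neg, pderiv_mul, pderiv_pow, pderiv_C, pderiv_X,
    pderiv_ofNat', Pi.single_apply, Fin.isValue, Fin.reduceEq, reduceIte, pow_one,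
    Nat.cast_ofNat, mul_zero, zero_mul, mul_one, one_mul, add_zero, zero_add, sub_zero,
    neg_zero, neg_neg, mul_neg, neg_mul]
  all_goals ring

set_option maxHeartbeats 1000000 in
lemma d3_9 : pderiv 9 (G3) = 96 * x2 * x5 * x6 * x12 * x13 ^ 2
    - 96 * x2 * x3 * x6 * x12 ^ 3
    - 48 * x2 ^ 2 * x7 * x12 ^ 2 * x13
    + 192 * x1 * x5 * x6 * x12 ^ 2 * x13
    + 192 * x1 * x4 * x6 * x12 ^ 3
    + 48 * x1 * x2 * x8 * x12 ^ 2 * x13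
    - 48 * x1 * x2 * x7 * x12 ^ 3
    + 48 * x1 ^ 2 * x8 * x12 ^ 3
    - 192 * x0 * x5 * x8 * x12 * x13 ^ 2
    - 96 * x0 * x5 * x7 * x12 ^ 2 * x13
    - 288 * x0 * x4 * x8 * x12 ^ 2 * x13
    - 96 * x0 * x4 * x7 * x12 ^ 3
    - 96 * x0 * x3 * x8 * x12 ^ 3
    + 96 * x0 * x2 * x11 * x12 * x13 ^ 2
    + 288 * x0 * x2 * x10 * x12 ^ 2 * x13
    + 192 * x0 * x2 * x9 * x12 ^ 3
    - 96 * x0 * x1 * x11 * x12 ^ 2 * x13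
    - 96 * x0 * x1 * x10 * x12 ^ 3 := by
  simp only [G3, x0, x1, x2, x3, x4, x5, x6, x7, x8, x9, x10, x11, x12, x13, map_add, map_sub, map_neg, pderiv_mul, pderiv_pow, pderiv_C, pderiv_X,
    pderiv_ofNat', Pi.single_apply, Fin.isValue, Fin.reduceEq, reduceIte, pow_one,
    Nat.cast_ofNat, mul_zero, zero_mul, mul_one, one_mul, add_zero, zero_add, sub_zero,
    neg_zero, neg_neg, mul_neg, neg_mul]
  all_goals ring

set_option maxHeartbeats 1000000 in
lemma d3_10 : pderiv 10 (G3) = 96 * x2 * x5 * x6 * x13 ^ 3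
    - 192 * x2 * x4 * x6 * x12 * x13 ^ 2
    - 288 * x2 * x3 * x6 * x12 ^ 2 * x13
    - 96 * x2 ^ 2 * x7 * x12 * x13 ^ 2
    + 288 * x1 * x5 * x6 * x12 * x13 ^ 2
    + 192 * x1 * x4 * x6 * x12 ^ 2 * x13
    - 96 * x1 * x3 * x6 * x12 ^ 3
    + 96 * x1 * x2 * x8 * x12 * x13 ^ 2
    - 96 * x1 * x2 * x7 * x12 ^ 2 * x13
    + 96 * x1 ^ 2 * x8 * x12 ^ 2 * x13
    - 192 * x0 * x5 * x8 * x13 ^ 3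
    - 192 * x0 * x4 * x8 * x12 * x13 ^ 2
    + 192 * x0 * x4 * x7 * x12 ^ 2 * x13
    + 192 * x0 * x3 * x7 * x12 ^ 3
    + 96 * x0 * x2 * x11 * x13 ^ 3
    + 384 * x0 * x2 * x10 * x12 * x13 ^ 2
    + 288 * x0 * x2 * x9 * x12 ^ 2 * x13
    - 288 * x0 * x1 * x11 * x12 * x13 ^ 2
    - 384 * x0 * x1 * x10 * x12 ^ 2 * x13
    - 96 * x0 * x1 * x9 * x12 ^ 3 := by
  simp only [G3, x0, x1, x2, x3, x4, x5, x6, x7, x8, x9, x10, x11, x12, x13, map_add, map_sub, map_neg, pderiv_mul, pderiv_pow, pderiv_C, pderiv_X,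
    pderiv_ofNat', Pi.single_apply, Fin.isValue, Fin.reduceEq, reduceIte, pow_one,
    Nat.cast_ofNat, mul_zero, zero_mul, mul_one, one_mul, add_zero, zero_add, sub_zero,
    neg_zero, neg_neg, mul_neg, neg_mul]
  all_goals ring

set_option maxHeartbeats 1000000 in
lemma d3_11 : pderiv 11 (G3) = -(192 * x2 * x4 * x6 * x13 ^ 3)
    - 192 * x2 * x3 * x6 * x12 * x13 ^ 2
    - 48 * x2 ^ 2 * x7 * x13 ^ 3
    + 96 * x1 * x5 * x6 * x13 ^ 3
    - 96 * x1 * x3 * x6 * x12 ^ 2 * x13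
    + 48 * x1 * x2 * x8 * x13 ^ 3
    - 48 * x1 * x2 * x7 * x12 * x13 ^ 2
    + 48 * x1 ^ 2 * x8 * x12 * x13 ^ 2
    + 96 * x0 * x5 * x7 * x13 ^ 3
    + 96 * x0 * x4 * x8 * x13 ^ 3
    + 288 * x0 * x4 * x7 * x12 * x13 ^ 2
    + 96 * x0 * x3 * x8 * x12 * x13 ^ 2
    + 192 * x0 * x3 * x7 * x12 ^ 2 * x13
    + 96 * x0 * x2 * x10 * x13 ^ 3
    + 96 * x0 * x2 * x9 * x12 * x13 ^ 2
    - 192 * x0 * x1 * x11 * x13 ^ 3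
    - 288 * x0 * x1 * x10 * x12 * x13 ^ 2
    - 96 * x0 * x1 * x9 * x12 ^ 2 * x13 := by
  simp only [G3, x0, x1, x2, x3, x4, x5, x6, x7, x8, x9, x10, x11, x12, x13, map_add, map_sub, map_neg, pderiv_mul, pderiv_pow, pderiv_C, pderiv_X,
    pderiv_ofNat', Pi.single_apply, Fin.isValue, Fin.reduceEq, reduceIte, pow_one,
    Nat.cast_ofNat, mul_zero, zero_mul, mul_one, one_mul, add_zero, zero_add, sub_zero,
    neg_zero, neg_neg, mul_neg, neg_mul]
  all_goals ring

set_option maxHeartbeats 2000000 in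
lemma step1 : 2 * LLop (mu0P) = G1 := by
  rw [two_LLop, d0_1, d0_2, d0_3, d0_4, d0_5, d0_7, d0_8, d0_9, d0_10, d0_11]
  simp only [G1, x0, x1, x2, x3, x4, x5, x6, x7, x8, x9, x10, x11, x12, x13]
  ring

set_option maxHeartbeats 2000000 in
lemma step2 : 2 * LLop (G1) = G2 := by
  rw [two_LLop, d1_1, d1_2, d1_3, d1_4, d1_5, d1_7, d1_8, d1_9, d1_10, d1_11]
  simp only [G2, x0, x1, x2, x3, x4, x5, x6, x7, x8, x9, x10, x11, x12, x13]
  ring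

set_option maxHeartbeats 2000000 in
lemma step3 : 2 * LLop (G2) = G3 := by
  rw [two_LLop, d2_1, d2_2, d2_3, d2_4, d2_5, d2_7, d2_8, d2_9, d2_10, d2_11]
  simp only [G3, x0, x1, x2, x3, x4, x5, x6, x7, x8, x9, x10, x11, x12, x13]
  ring

set_option maxHeartbeats 2000000 in
lemma step4 : 2 * LLop (G3) = G4 := by
  rw [two_LLop, d3_1, d3_2, d3_3, d3_4, d3_5, d3_7, d3_8, d3_9, d3_10, d3_11]
  simp only [G4, x0, x1, x2, x3, x4, x5, x6, x7, x8, x9, x10, x11, x12, x13]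
  ring

lemma evalAt_0 (a : Fin 12 → ℝ) (x y : ℝ) : evalAt a x y 0 = a 0 := rfl
lemma evalAt_1 (a : Fin 12 → ℝ) (x y : ℝ) : evalAt a x y 1 = a 1 := rfl
lemma evalAt_2 (a : Fin 12 → ℝ) (x y : ℝ) : evalAt a x y 2 = a 2 := rfl
lemma evalAt_3 (a : Fin 12 → ℝ) (x y : ℝ) : evalAt a x y 3 = a 3 := rfl
lemma evalAt_4 (a : Fin 12 → ℝ) (x y : ℝ) : evalAt a x y 4 = a 4 := rfl
lemma evalAt_5 (a : Fin 12 → ℝ) (x y : ℝ) : evalAt a x y 5 = a 5 := rfl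
lemma evalAt_6 (a : Fin 12 → ℝ) (x y : ℝ) : evalAt a x y 6 = a 6 := rfl
lemma evalAt_7 (a : Fin 12 → ℝ) (x y : ℝ) : evalAt a x y 7 = a 7 := rfl
lemma evalAt_8 (a : Fin 12 → ℝ) (x y : ℝ) : evalAt a x y 8 = a 8 := rfl
lemma evalAt_9 (a : Fin 12 → ℝ) (x y : ℝ) : evalAt a x y 9 = a 9 := rfl
lemma evalAt_10 (a : Fin 12 → ℝ) (x y : ℝ) : evalAt a x y 10 = a 10 := rfl
lemma evalAt_11 (a : Fin 12 → ℝ) (x y : ℝ) : evalAt a x y 11 = a 11 := rfl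
lemma evalAt_12 (a : Fin 12 → ℝ) (x y : ℝ) : evalAt a x y 12 = x := rfl
lemma evalAt_13 (a : Fin 12 → ℝ) (x y : ℝ) : evalAt a x y 13 = y := rfl

end QSaux

set_option maxHeartbeats 4000000

/-- `μ₄(a,X,Y)` equals the resultant (Sylvester determinant) with respect to
`Z` of the homogenizations `P(X,Y,Z)` and `Q(X,Y,Z)`, regarded as degree-2 polynomials in
`Z` with coefficients `p₀, p₁(X,Y), p₂(X,Y)` and `q₀, q₁(X,Y), q₂(X,Y)`. -/
theorem mu4_eq_resultant_Z (a : Fin 12 → ℝ) (Xv Yv : ℝ) :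
    muf 4 a Xv Yv =
      Matrix.det !![a 0, p1f a Xv Yv, p2f a Xv Yv, (0 : ℝ);
                    0, a 0, p1f a Xv Yv, p2f a Xv Yv;
                    a 6, q1f a Xv Yv, q2f a Xv Yv, 0;
                    0, a 6, q1f a Xv Yv, q2f a Xv Yv] := by
  have key : (16 : R14) * (LLop^[4] mu0P) = QSaux.G4 := by
    have hit : (16 : R14) * (LLop^[4] mu0P)
        = 2 * LLop (2 * LLop (2 * LLop (2 * LLop mu0P))) := by
      simp only [Function.iterate_succ, Function.iterate_zero, Function.comp_apply, id_eq,
        QSaux.LLop_two_mul]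
      ring
    rw [hit, QSaux.step1, QSaux.step2, QSaux.step3, QSaux.step4]
  have h16 := congrArg (eval (evalAt a Xv Yv)) key
  simp only [map_mul, map_ofNat] at h16
  unfold muf muP
  rw [show ((Nat.factorial 4 : ℕ) : ℝ)⁻¹ = (24 : ℝ)⁻¹ by norm_num [Nat.factorial]]
  rw [MvPolynomial.smul_eval]
  simp only [QSaux.G4, QSaux.x0, QSaux.x1, QSaux.x2, QSaux.x3, QSaux.x4, QSaux.x5, QSaux.x6, QSaux.x7, QSaux.x8, QSaux.x9, QSaux.x10, QSaux.x11, QSaux.x12, QSaux.x13, map_add, map_sub, map_mul, map_pow, map_ofNat, map_neg, eval_X,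
    QSaux.evalAt_0, QSaux.evalAt_1, QSaux.evalAt_2, QSaux.evalAt_3, QSaux.evalAt_4,
    QSaux.evalAt_5, QSaux.evalAt_6, QSaux.evalAt_7, QSaux.evalAt_8, QSaux.evalAt_9,
    QSaux.evalAt_10, QSaux.evalAt_11, QSaux.evalAt_12, QSaux.evalAt_13] at h16
  have hdet : Matrix.det !![a 0, p1f a Xv Yv, p2f a Xv Yv, (0 : ℝ);
                    0, a 0, p1f a Xv Yv, p2f a Xv Yv;
                    a 6, q1f a Xv Yv, q2f a Xv Yv, 0;
                    0, a 6, q1f a Xv Yv, q2f a Xv Yv] =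
      (a 5) ^ 2 * (a 6) ^ 2 * Yv ^ 4
      + 4 * (a 4) * (a 5) * (a 6) ^ 2 * Xv * Yv ^ 3
      + 4 * (a 4) ^ 2 * (a 6) ^ 2 * Xv ^ 2 * Yv ^ 2
      + 2 * (a 3) * (a 5) * (a 6) ^ 2 * Xv ^ 2 * Yv ^ 2
      + 4 * (a 3) * (a 4) * (a 6) ^ 2 * Xv ^ 3 * Yv
      + (a 3) ^ 2 * (a 6) ^ 2 * Xv ^ 4
      - (a 2) * (a 5) * (a 6) * (a 8) * Yv ^ 4
      - (a 2) * (a 5) * (a 6) * (a 7) * Xv * Yv ^ 3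
      - 2 * (a 2) * (a 4) * (a 6) * (a 8) * Xv * Yv ^ 3
      - 2 * (a 2) * (a 4) * (a 6) * (a 7) * Xv ^ 2 * Yv ^ 2
      - (a 2) * (a 3) * (a 6) * (a 8) * Xv ^ 2 * Yv ^ 2
      - (a 2) * (a 3) * (a 6) * (a 7) * Xv ^ 3 * Yv
      + (a 2) ^ 2 * (a 6) * (a 11) * Yv ^ 4
      + 2 * (a 2) ^ 2 * (a 6) * (a 10) * Xv * Yv ^ 3
      + (a 2) ^ 2 * (a 6) * (a 9) * Xv ^ 2 * Yv ^ 2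
      - (a 1) * (a 5) * (a 6) * (a 8) * Xv * Yv ^ 3
      - (a 1) * (a 5) * (a 6) * (a 7) * Xv ^ 2 * Yv ^ 2
      - 2 * (a 1) * (a 4) * (a 6) * (a 8) * Xv ^ 2 * Yv ^ 2
      - 2 * (a 1) * (a 4) * (a 6) * (a 7) * Xv ^ 3 * Yv
      - (a 1) * (a 3) * (a 6) * (a 8) * Xv ^ 3 * Yv
      - (a 1) * (a 3) * (a 6) * (a 7) * Xv ^ 4
      + 2 * (a 1) * (a 2) * (a 6) * (a 11) * Xv * Yv ^ 3
      + 4 * (a 1) * (a 2) * (a 6) * (a 10) * Xv ^ 2 * Yv ^ 2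
      + 2 * (a 1) * (a 2) * (a 6) * (a 9) * Xv ^ 3 * Yv
      + (a 1) ^ 2 * (a 6) * (a 11) * Xv ^ 2 * Yv ^ 2
      + 2 * (a 1) ^ 2 * (a 6) * (a 10) * Xv ^ 3 * Yv
      + (a 1) ^ 2 * (a 6) * (a 9) * Xv ^ 4
      + (a 0) * (a 5) * (a 8) ^ 2 * Yv ^ 4
      + 2 * (a 0) * (a 5) * (a 7) * (a 8) * Xv * Yv ^ 3
      + (a 0) * (a 5) * (a 7) ^ 2 * Xv ^ 2 * Yv ^ 2
      - 2 * (a 0) * (a 5) * (a 6) * (a 11) * Yv ^ 4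
      - 4 * (a 0) * (a 5) * (a 6) * (a 10) * Xv * Yv ^ 3
      - 2 * (a 0) * (a 5) * (a 6) * (a 9) * Xv ^ 2 * Yv ^ 2
      + 2 * (a 0) * (a 4) * (a 8) ^ 2 * Xv * Yv ^ 3
      + 4 * (a 0) * (a 4) * (a 7) * (a 8) * Xv ^ 2 * Yv ^ 2
      + 2 * (a 0) * (a 4) * (a 7) ^ 2 * Xv ^ 3 * Yv
      - 4 * (a 0) * (a 4) * (a 6) * (a 11) * Xv * Yv ^ 3
      - 8 * (a 0) * (a 4) * (a 6) * (a 10) * Xv ^ 2 * Yv ^ 2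
      - 4 * (a 0) * (a 4) * (a 6) * (a 9) * Xv ^ 3 * Yv
      + (a 0) * (a 3) * (a 8) ^ 2 * Xv ^ 2 * Yv ^ 2
      + 2 * (a 0) * (a 3) * (a 7) * (a 8) * Xv ^ 3 * Yv
      + (a 0) * (a 3) * (a 7) ^ 2 * Xv ^ 4
      - 2 * (a 0) * (a 3) * (a 6) * (a 11) * Xv ^ 2 * Yv ^ 2
      - 4 * (a 0) * (a 3) * (a 6) * (a 10) * Xv ^ 3 * Yv
      - 2 * (a 0) * (a 3) * (a 6) * (a 9) * Xv ^ 4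
      - (a 0) * (a 2) * (a 8) * (a 11) * Yv ^ 4
      - 2 * (a 0) * (a 2) * (a 8) * (a 10) * Xv * Yv ^ 3
      - (a 0) * (a 2) * (a 8) * (a 9) * Xv ^ 2 * Yv ^ 2
      - (a 0) * (a 2) * (a 7) * (a 11) * Xv * Yv ^ 3
      - 2 * (a 0) * (a 2) * (a 7) * (a 10) * Xv ^ 2 * Yv ^ 2
      - (a 0) * (a 2) * (a 7) * (a 9) * Xv ^ 3 * Yv
      - (a 0) * (a 1) * (a 8) * (a 11) * Xv * Yv ^ 3
      - 2 * (a 0) * (a 1) * (a 8) * (a 10) * Xv ^ 2 * Yv ^ 2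
      - (a 0) * (a 1) * (a 8) * (a 9) * Xv ^ 3 * Yv
      - (a 0) * (a 1) * (a 7) * (a 11) * Xv ^ 2 * Yv ^ 2
      - 2 * (a 0) * (a 1) * (a 7) * (a 10) * Xv ^ 3 * Yv
      - (a 0) * (a 1) * (a 7) * (a 9) * Xv ^ 4
      + (a 0) ^ 2 * (a 11) ^ 2 * Yv ^ 4
      + 4 * (a 0) ^ 2 * (a 10) * (a 11) * Xv * Yv ^ 3
      + 4 * (a 0) ^ 2 * (a 10) ^ 2 * Xv ^ 2 * Yv ^ 2
      + 2 * (a 0) ^ 2 * (a 9) * (a 11) * Xv ^ 2 * Yv ^ 2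
      + 4 * (a 0) ^ 2 * (a 9) * (a 10) * Xv ^ 3 * Yv
      + (a 0) ^ 2 * (a 9) ^ 2 * Xv ^ 4 := by
    have e1 : (Fin.succAbove (1 : Fin 4) (2 : Fin 3)) = 3 := by decide
    have e2 : (Fin.succAbove (2 : Fin 4) (2 : Fin 3)) = 3 := by decide
    simp [Matrix.det_succ_row_zero, Fin.sum_univ_succ,
      p1f, p2f, q1f, q2f, e1, e2]
    ring
  rw [hdet]
  linear_combination (norm := ring1) (1/384 : ℝ) * h16
end QSinf
end
end

section
/- Let a ∈ ℝ^12 and let P(X,Y,Z) = Z²·p(X/Z, Y/Z), Q(X,Y,Z) = Z²·q(X/Z, Y/Z) be the homogenizations of p and q. Then for every (X0, Y0, Z0) ∈ ℂ³ with P(X0,Y0,Z0) = 0 and Q(X0,Y0,Z0) = 0 (in particular for every common zero, including points with Z0 = 0), one has μ4(a, X0, Y0) = 0, where μ4 is evaluated by extending scalars to ℂ. -/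
/-! `𝓛` is a derivation that kills `x, y` and, viewing `p₀, p₁, p₂` as binary forms in `(u, v)`,
acts by `p₂ ↦ w·p₁`, `p₁ ↦ 2w·p₀`, `p₀ ↦ 0` with `w = x·v - y·u` (likewise for `q`). So `𝓛³`
kills every coefficient, and the Leibniz rule applied to `μ₀ = Res(p₂, q₂)` shows that `μ₄(a, x, y)`
is the resultant in `Z` of `P(x, y, Z)` and `Q(x, y, Z)`. At a common zero `(X₀, Y₀, Z₀)` these two
quadratics in `Z` (with `(x, y) = (X₀, Y₀)`) share the root `Z₀`, so the resultant vanishes. -/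

open MvPolynomial Finset

noncomputable section

namespace QSinf

theorem _root_.Derivation.iterate_leibniz {R A : Type*} [CommSemiring R] [CommSemiring A]
    [Algebra R A] (D : Derivation R A A) (n : ℕ) (a b : A) :
    D^[n] (a * b) = ∑ i ∈ range (n + 1), n.choose i • (D^[i] a * D^[n - i] b) := by
  rw [← Nat.sum_antidiagonal_eq_sum_range_succ (fun i j => n.choose i • (D^[i] a * D^[j] b))]
  induction n with
  | zero => simp
  | succ n ih =>
    rw [sum_antidiagonal_choose_succ_nsmul (M := A) (fun i j => D^[i] a * D^[j] b) n]
    simp only [Function.iterate_succ_apply', ih, map_sum, map_nsmul, Derivation.leibniz,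
      smul_eq_mul, nsmul_add, sum_add_distrib]
    refine congrArg _ (sum_congr rfl fun ij hij => ?_)
    rw [Nat.choose_symm_of_eq_add (mem_antidiagonal.1 hij).symm, mul_comm]

section Resultant

variable {R S : Type*} [CommRing R] [CommRing S]

/-- The Sylvester resultant of `a₀ + a₁ t + a₂ t²` and `b₀ + b₁ t + b₂ t²`. -/
def quadResultant (a₀ a₁ a₂ b₀ b₁ b₂ : R) : R :=
  (a₀ * b₂ - a₂ * b₀) ^ 2 - (a₀ * b₁ - a₁ * b₀) * (a₁ * b₂ - a₂ * b₁)

theorem map_quadResultant {F : Type*} [FunLike F R S] [RingHomClass F R S] (φ : F)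
    (a₀ a₁ a₂ b₀ b₁ b₂ : R) :
    φ (quadResultant a₀ a₁ a₂ b₀ b₁ b₂) =
      quadResultant (φ a₀) (φ a₁) (φ a₂) (φ b₀) (φ b₁) (φ b₂) := by
  simp [quadResultant]

theorem quadResultant_eq_zero_of_common_root {a₀ a₁ a₂ b₀ b₁ b₂ z : R}
    (hf : a₀ + a₁ * z + a₂ * z ^ 2 = 0) (hg : b₀ + b₁ * z + b₂ * z ^ 2 = 0) :
    quadResultant a₀ a₁ a₂ b₀ b₁ b₂ = 0 := by
  -- with `c = a₀b₂ - a₂b₀`, `d = a₁b₂ - a₂b₁`: `Res = (c - d z)(b₂ f - a₂ g) - d (b₁ f - a₁ g)`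
  set c := a₀ * b₂ - a₂ * b₀
  set d := a₁ * b₂ - a₂ * b₁
  unfold quadResultant
  linear_combination ((c - d * z) * b₂ - d * b₁) * hf + (d * a₁ - (c - d * z) * a₂) * hg

end Resultant

/-- `2𝓛`: unlike `𝓛` it has integer coefficients, so identities about it close by `ring`. -/
def twoLLDer : Derivation ℝ R14 R14 :=
  (X 12 : R14) • ((4 * X 0 : R14) • pderiv 2 + (X 1 : R14) • pderiv 4 + (2 * X 2 : R14) • pderiv 5
      + (4 * X 6 : R14) • pderiv 8 + (X 7 : R14) • pderiv 10 + (2 * X 8 : R14) • pderiv 11)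
    - (X 13 : R14) • ((4 * X 0 : R14) • pderiv 1 + (2 * X 1 : R14) • pderiv 3
      + (X 2 : R14) • pderiv 4 + (4 * X 6 : R14) • pderiv 7 + (2 * X 7 : R14) • pderiv 9
      + (X 8 : R14) • pderiv 10)

theorem two_mul_LLop (f : R14) : 2 * LLop f = twoLLDer f := by
  have half : (C (1 / 2 : ℝ) : R14) * 2 = 1 := by
    rw [← map_ofNat C 2, ← map_mul]; norm_num
  simp only [LLop, L1op, L2op, twoLLDer, Derivation.coe_sub, Derivation.coe_add,
    Derivation.coe_smul, Pi.sub_apply, Pi.add_apply, Pi.smul_apply, smul_eq_mul]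
  linear_combination (X 12 * X 1 * pderiv 4 f + X 12 * X 7 * pderiv 10 f
    - X 13 * X 2 * pderiv 4 f - X 13 * X 8 * pderiv 10 f) * half

theorem twoLLDer_ofNat (n : ℕ) [n.AtLeastTwo] : twoLLDer (no_index (OfNat.ofNat n) : R14) = 0 := by
  rw [← map_ofNat (algebraMap ℝ R14) n]
  exact twoLLDer.map_algebraMap _

theorem twoLLDer_X (i : Fin 14) : twoLLDer (X i) =
    ![0, -4 * X 13 * X 0, 4 * X 12 * X 0, -2 * X 13 * X 1, X 12 * X 1 - X 13 * X 2, 2 * X 12 * X 2,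
      0, -4 * X 13 * X 6, 4 * X 12 * X 6, -2 * X 13 * X 7, X 12 * X 7 - X 13 * X 8, 2 * X 12 * X 8,
      0, 0] i := by
  have pderiv_X_apply (j : Fin 14) : pderiv j (X i : R14) = if i = j then 1 else 0 := by
    rw [pderiv_X, Pi.single_apply, eq_comm]
  fin_cases i <;> simp only [twoLLDer, Derivation.coe_sub, Derivation.coe_add,
    Derivation.coe_smul, Pi.sub_apply, Pi.add_apply, Pi.smul_apply, smul_eq_mul,
    pderiv_X_apply] <;> simp <;> ring

theorem iterate_two_twoLLDer_X (i : Fin 14) : twoLLDer^[2] (X i) =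
    ![0, 0, 0, 8 * X 13 ^ 2 * X 0, -8 * X 12 * X 13 * X 0, 8 * X 12 ^ 2 * X 0,
      0, 0, 0, 8 * X 13 ^ 2 * X 6, -8 * X 12 * X 13 * X 6, 8 * X 12 ^ 2 * X 6, 0, 0] i := by
  fin_cases i <;> simp [twoLLDer_X, Derivation.leibniz, twoLLDer_ofNat] <;> ring

theorem iterate_twoLLDer_X_of_three_le (i : Fin 14) {k : ℕ} (hk : 3 ≤ k) :
    twoLLDer^[k] (X i) = 0 := by
  obtain ⟨k, rfl⟩ := Nat.exists_eq_add_of_le' hk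
  rw [Function.iterate_add_apply, show 3 = 1 + 2 from rfl, Function.iterate_add_apply,
    iterate_two_twoLLDer_X]
  fin_cases i <;> simp [twoLLDer_X, Derivation.leibniz, twoLLDer_ofNat, iterate_map_zero]

/-- The resultant in `Z` of `P(x, y, Z)` and `Q(x, y, Z)`. -/
def resultantInZ : R14 :=
  quadResultant (X 3 * X 12 ^ 2 + 2 * X 4 * X 12 * X 13 + X 5 * X 13 ^ 2)
    (X 1 * X 12 + X 2 * X 13) (X 0)
    (X 9 * X 12 ^ 2 + 2 * X 10 * X 12 * X 13 + X 11 * X 13 ^ 2) (X 7 * X 12 + X 8 * X 13) (X 6)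

theorem iterate_four_twoLLDer_mu0P : twoLLDer^[4] mu0P = 384 * resultantInZ := by
  have hmu0 : mu0P = (X 3 * X 11 - X 5 * X 9) * (X 3 * X 11 - X 5 * X 9)
      - 4 • ((X 3 * X 10 - X 4 * X 9) * (X 4 * X 11 - X 5 * X 10)) := by
    rw [mu0P]; ring
  rw [hmu0]
  simp only [iterate_map_sub, iterate_map_nsmul, twoLLDer.iterate_leibniz, sum_range_succ,
    sum_range_zero, Nat.choose]
  simp [twoLLDer_X, iterate_two_twoLLDer_X, iterate_twoLLDer_X_of_three_le, resultantInZ,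
    quadResultant]
  ring

theorem two_pow_mul_iterate_LLop (n : ℕ) (f : R14) : 2 ^ n * LLop^[n] f = twoLLDer^[n] f := by
  induction n with
  | zero => simp
  | succ n ih =>
    rw [Function.iterate_succ_apply', Function.iterate_succ_apply', ← ih, pow_succ, mul_assoc,
      two_mul_LLop, Derivation.leibniz, Derivation.leibniz_pow, twoLLDer_ofNat]
    simp

theorem muP_four : muP 4 = resultantInZ := by
  have h := two_pow_mul_iterate_LLop 4 mu0P
  rw [iterate_four_twoLLDer_mu0P] at h
  have h24 : LLop^[4] mu0P = (24 : ℝ) • resultantInZ := by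
    rw [Algebra.smul_def, map_ofNat]
    exact mul_left_cancel₀ (pow_ne_zero 4 two_ne_zero) (by linear_combination h)
  rw [muP, h24, smul_smul, Nat.factorial]
  norm_num

theorem mufC_four (a : Fin 12 → ℝ) (x y : ℂ) : mufC 4 a x y =
    quadResultant ((a 3 : ℂ) * x ^ 2 + 2 * (a 4 : ℂ) * x * y + (a 5 : ℂ) * y ^ 2)
      ((a 1 : ℂ) * x + (a 2 : ℂ) * y) (a 0 : ℂ)
      ((a 9 : ℂ) * x ^ 2 + 2 * (a 10 : ℂ) * x * y + (a 11 : ℂ) * y ^ 2)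
      ((a 7 : ℂ) * x + (a 8 : ℂ) * y) (a 6 : ℂ) := by
  rw [mufC, muP_four, resultantInZ, map_quadResultant]
  simp [evalAtC]

/-- Every common (complex, possibly infinite) zero `(X₀,Y₀,Z₀)` of the
homogenizations `P` and `Q` satisfies `μ₄(a,X₀,Y₀) = 0`. -/
theorem mu4_vanishes_at_common_zeros (a : Fin 12 → ℝ) (X0 Y0 Z0 : ℂ)
    (hP : PfC a X0 Y0 Z0 = 0) (hQ : QfC a X0 Y0 Z0 = 0) :
    mufC 4 a X0 Y0 = 0 := by
  rw [mufC_four]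
  unfold PfC at hP
  unfold QfC at hQ
  exact quadResultant_eq_zero_of_common_root (z := Z0) (by linear_combination hP)
    (by linear_combination hQ)
end QSinf
end
end
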